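/- arXiv:2301.12426 — 6 statements merged into one kernel-verified Lean document; each statement's English description precedes it below -/
import Mathlib

section
/- Every sparse word is an isoterm for the monoid IC_4: if w is a sparse word and IC_4 satisfies the identity w ≈ v for some word v, then v = w. -/
/-! ### Identities and finite bases -/

/-- A semigroup `S` satisfies the identity `u ≈ v` (for words `u`, `v` in the free semigroup on
the countably infinite set of variables `ℕ`) if every homomorphism from the free semigroup to
`S` — equivalently, every substitution `f : ℕ → S` — equalizes `u` and `v`. -/
def Satisfies (S : Type*) [Semigroup S] (u v : FreeSemigroup ℕ) : Prop :=
  ∀ f : ℕ → S, FreeSemigroup.lift f u = FreeSemigroup.lift f v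

/-- A semigroup is finitely based if there is a finite set of identities it satisfies such that
every semigroup satisfying those identities satisfies every identity of `S`. -/
def FinitelyBased (S : Type*) [Semigroup S] : Prop :=
  ∃ B : Finset (FreeSemigroup ℕ × FreeSemigroup ℕ),
    (∀ p ∈ B, Satisfies S p.1 p.2) ∧
    ∀ (T : Type) [Semigroup T], (∀ p ∈ B, Satisfies T p.1 p.2) →
      ∀ u v : FreeSemigroup ℕ, Satisfies S u v → Satisfies T u v

/-- `T` belongs to the variety generated by `S`: `T` satisfies every identity of `S`. -/
def InVarietyOf (T S : Type*) [Semigroup T] [Semigroup S] : Prop :=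
  ∀ u v : FreeSemigroup ℕ, Satisfies S u v → Satisfies T u v

/-! ### The i-Catalan monoids -/

/-- Partial maps of the chain `Fin m` (order-isomorphic to `1 < 2 < ⋯ < m`) that are injective,
order preserving and extensive; `toFun i = some j` means the map is defined at `i` with value
`j`, and `toFun i = none` means `i` is not in the domain. -/
structure ICmon (m : ℕ) where
  toFun : Fin m → Option (Fin m)
  inj' : ∀ i j a, toFun i = some a → toFun j = some a → i = j
  mono' : ∀ i j a b, i ≤ j → toFun i = some a → toFun j = some b → a ≤ b
  extv' : ∀ i a, toFun i = some a → i ≤ a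

namespace ICmon

@[ext] theorem ext {m : ℕ} {α β : ICmon m} (h : α.toFun = β.toFun) : α = β := by
  cases α; cases β; cases h; rfl

/-- Composition of partial maps, written left-to-right (`α * β` is "first `α`, then `β`"),
with the identity map as the unit. -/
instance (m : ℕ) : Monoid (ICmon m) where
  mul α β :=
    { toFun := fun i => (α.toFun i).bind β.toFun
      inj' := by
        intro i j a hi hj
        rcases Option.bind_eq_some_iff.mp hi with ⟨b, hb, hba⟩
        rcases Option.bind_eq_some_iff.mp hj with ⟨c, hc, hca⟩
        obtain rfl : b = c := β.inj' _ _ _ hba hca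
        exact α.inj' _ _ _ hb hc
      mono' := by
        intro i j a b hij hi hj
        rcases Option.bind_eq_some_iff.mp hi with ⟨p, hp, hpa⟩
        rcases Option.bind_eq_some_iff.mp hj with ⟨q, hq, hqb⟩
        exact β.mono' _ _ _ _ (α.mono' _ _ _ _ hij hp hq) hpa hqb
      extv' := by
        intro i a hi
        rcases Option.bind_eq_some_iff.mp hi with ⟨p, hp, hpa⟩
        exact le_trans (α.extv' _ _ hp) (β.extv' _ _ hpa) }
  one :=
    { toFun := fun i => some i
      inj' := by intro i j a hi hj; rw [Option.some_inj] at hi hj; rw [hi, hj]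
      mono' := by
        intro i j a b hij hi hj
        rw [Option.some_inj] at hi hj; subst hi; subst hj; exact hij
      extv' := by intro i a hi; rw [Option.some_inj] at hi; exact hi.le }
  mul_assoc α β γ := by
    ext1; funext i
    show ((α.toFun i).bind β.toFun).bind γ.toFun
        = (α.toFun i).bind fun b => (β.toFun b).bind γ.toFun
    cases α.toFun i <;> rfl
  one_mul α := by ext1; funext i; rfl
  mul_one α := by
    ext1; funext i
    show (α.toFun i).bind some = α.toFun i
    cases α.toFun i <;> rfl

end ICmon

/-- The 42-element i-Catalan monoid of all injective, order preserving and extensive partial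
maps of the 4-element chain. -/
abbrev IC4 := ICmon 4

/-! ### Combinatorics of words, viewed as lists of variables -/

/-- The list of letters of a word of the free semigroup. -/
def wToList (w : FreeSemigroup ℕ) : List ℕ := w.head :: w.tail

/-- The word of the free semigroup whose list of letters is the given (nonempty) list
(a junk value is returned on the empty list). -/
def wOfList : List ℕ → FreeSemigroup ℕ
  | [] => FreeSemigroup.of 0
  | a :: l => ⟨a, l⟩

/-- `restrict w X` is the word `w(X)` (possibly empty) obtained from `w` by deleting all
occurrences of variables not belonging to `X`. -/
noncomputable def restrict (w : List ℕ) (X : Set ℕ) : List ℕ :=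
  w.filter fun a => @decide (a ∈ X) (Classical.propDecidable _)

/-- The word `u` occurs as a factor of `w` at most once: there is at most one decomposition
`w = v' ++ u ++ v''`. -/
def FactorAtMostOnce (u w : List ℕ) : Prop :=
  ∀ p₁ s₁ p₂ s₂ : List ℕ, p₁ ++ u ++ s₁ = w → p₂ ++ u ++ s₂ = w → p₁ = p₂ ∧ s₁ = s₂

/-- Between any two occurrences (at positions `i < j`) of any variable `z` in `w` there occur
at least `n` pairwise distinct variables. -/
def DistinctBetween (n : ℕ) (w : List ℕ) : Prop :=
  ∀ (z i j : ℕ), i < j → w[i]? = some z → w[j]? = some z →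
    n ≤ ((w.take j).drop (i + 1)).toFinset.card

/-- A word is sparse if between any two occurrences of a repeated variable there is an
occurrence of some linear variable (i.e. a variable occurring exactly once in the word). -/
def Sparse (w : List ℕ) : Prop :=
  ∀ (z i j : ℕ), i < j → w[i]? = some z → w[j]? = some z →
    ∃ y, w.count y = 1 ∧ y ∈ (w.take j).drop (i + 1)

/-- The `j`-th power of a word, as a list. -/
def powerList (j : ℕ) (l : List ℕ) : List ℕ := (List.replicate j l).flatten

/-!
A substitution `f : ℕ → IC₄` acts on the states `0 < 1 < 2 < 3`, and a word is evaluated by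
following a state through its letters. Send a linear letter `t` to `0 ↦ 1`, a linear letter `t'`
occurring after it to `s ↦ 3`, and all other letters to maps fixing `0` and `3`: the word then
takes `0` to `3` exactly when its factor between `t` and `t'` takes `1` to `s`. Hence, if `IC₄`
satisfies `w ≈ v`, corresponding factors of `w` and `v` between linear letters act alike on
state `1`, once fresh linear letters are adjoined at both ends of the words.
Three kinds of substitutions then show that such factors contain the same letters, the same
letters exactly once, and the latter in the same order, which determines a factor without
repeated letters. Applied to the linear letters of the whole word, this shows that `v` has the
same linear letters as `w`, in the same order; applied to the factors between consecutive linear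
letters, which sparseness makes free of repetitions, it shows that these factors agree too.
-/

open List

namespace List

variable {α : Type*}

theorem pair_sublist_or_pair_sublist {x y : α} {l : List α} (hx : x ∈ l) (hy : y ∈ l)
    (hxy : x ≠ y) : [x, y] <+ l ∨ [y, x] <+ l := by
  induction l with
  | nil => simp at hx
  | cons a l ih =>
    rcases mem_cons.1 hx with rfl | hxl
    · exact .inl (cons_sublist_cons.2 (singleton_sublist.2 ((mem_cons.1 hy).resolve_left hxy.symm)))
    rcases mem_cons.1 hy with rfl | hyl
    · exact .inr (cons_sublist_cons.2 (singleton_sublist.2 hxl))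
    exact (ih hxl hyl).imp (sublist_cons_of_sublist a) (sublist_cons_of_sublist a)

theorem Sublist.not_swap_pair [BEq α] [LawfulBEq α] {x y : α} {l : List α} (h : [x, y] <+ l)
    (hx : l.count x ≤ 1) (hy : l.count y ≤ 1) : ¬[y, x] <+ l := by
  induction l with
  | nil => simp at h
  | cons a l ih =>
    intro h'
    simp only [sublist_cons_iff, cons.injEq] at h h'
    have notMem {b : α} (hb : count b (b :: l) ≤ 1) : b ∉ l := by
      simpa [count_cons_self, count_eq_zero] using hb
    rcases h with h | ⟨_, ⟨rfl, rfl⟩, hyl⟩ <;> rcases h' with h' | ⟨_, ⟨rfl, rfl⟩, hxl⟩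
    · exact ih h ((count_le_count_cons ..).trans hx) ((count_le_count_cons ..).trans hy) h'
    · exact notMem hy (h.subset (by simp))
    · exact notMem hx (h'.subset (by simp))
    · exact notMem hx (singleton_sublist.1 hyl)

theorem eq_of_nodup_of_pair_sublist {B C : List α} (hB : B.Nodup) (hC : C.Nodup)
    (hmem : ∀ a, a ∈ B ↔ a ∈ C) (hord : ∀ a b, [a, b] <+ B → [a, b] <+ C) : B = C := by
  induction B generalizing C with
  | nil => exact (eq_nil_iff_forall_not_mem.2 fun a ha => by simpa using (hmem a).2 ha).symm
  | cons x B ih =>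
    obtain ⟨hxB, hB'⟩ := nodup_cons.1 hB
    obtain _ | ⟨c, C⟩ := C
    · simpa using (hmem x).1 (mem_cons_self ..)
    obtain ⟨hcC, hC'⟩ := nodup_cons.1 hC
    obtain rfl : x = c := by
      by_contra hxc
      have hcB : c ∈ B := (mem_cons.1 ((hmem c).2 (mem_cons_self ..))).resolve_left (Ne.symm hxc)
      rcases sublist_cons_iff.1 (hord x c (cons_sublist_cons.2 (singleton_sublist.2 hcB))) with
        h | ⟨r, hr, -⟩
      · exact hcC (h.subset (by simp))
      · exact hxc (cons.inj hr).1
    refine congrArg _ (ih hB' hC' (fun a => ?_) fun a b hab => ?_)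
    · by_cases hax : a = x
      · subst hax; simp [hxB, hcC]
      · simpa [hax] using hmem a
    · rcases sublist_cons_iff.1 (hord a b (hab.cons x)) with h | ⟨r, hr, -⟩
      · exact h
      · cases hr; exact absurd (hab.subset (by simp)) hxB

theorem notMem_of_count_eq_one [BEq α] [LawfulBEq α] {x : α} {l₁ l₂ : List α}
    (h : (l₁ ++ x :: l₂).count x = 1) : x ∉ l₁ ++ l₂ := by
  simp only [count_append, count_cons_self] at h
  rw [mem_append, not_or, ← count_eq_zero, ← count_eq_zero]
  omega

theorem IsInfix.of_cons_append_singleton {B W : List α} {a b : α} (h : B <:+: a :: (W ++ [b]))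
    (ha : a ∉ B) (hb : b ∉ B) : B <:+: W := by
  rcases infix_cons_iff.1 h with h | h
  · rcases prefix_cons_iff.1 h with rfl | ⟨_, rfl, -⟩
    · exact nil_infix
    · simp at ha
  rcases infix_concat_iff.1 h with h | h
  · rcases suffix_concat_iff.1 h with rfl | ⟨_, rfl, -⟩
    · exact nil_infix
    · simp at hb
  · exact h

theorem eq_of_filter_eq_of_blocks_eq (p : α → Bool) {t : α} (ht : p t) {W V : List α}
    (hf : W.filter p = V.filter p) (hW : ∀ z ∈ W.getLast?, p z) (hV : ∀ z ∈ V.getLast?, p z)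
    (hblocks : ∀ s s' B C, p s → p s' → (∀ z ∈ B, ¬p z) → (∀ z ∈ C, ¬p z) →
      s :: B ++ [s'] <:+: t :: W → s :: C ++ [s'] <:+: t :: V → B = C) : W = V := by
  have nil_of_filter {L : List α} (hL : ∀ z ∈ L.getLast?, p z) (h : L.filter p = []) :
      L = [] := by
    rw [← getLast?_eq_none_iff]
    cases hz : L.getLast? with
    | none => rfl
    | some z => simpa [hL z hz] using (filter_eq_nil_iff.1 h) z (mem_of_mem_getLast? hz)
  cases hs : W.find? p with
  | none =>
    have hWf : W.filter p = [] := filter_eq_nil_iff.2 (find?_eq_none.1 hs)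
    rw [nil_of_filter hW hWf, nil_of_filter hV (hf ▸ hWf)]
  | some s =>
    obtain ⟨hps, B, W₂, rfl, hB⟩ := find?_eq_some_iff_append.1 hs
    have hVs : V.find? p = some s := by rw [← head?_filter, ← hf, head?_filter, hs]
    obtain ⟨-, C, V₂, rfl, hC⟩ := find?_eq_some_iff_append.1 hVs
    have hBC : B = C := hblocks t s B C ht hps (by simpa using hB) (by simpa using hC)
      ⟨[], W₂, by simp⟩ ⟨[], V₂, by simp⟩
    have hWV₂ : W₂ = V₂ := by
      refine eq_of_filter_eq_of_blocks_eq p hps ?_ ?_ ?_ ?_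
      · have hBf : B.filter p = [] := filter_eq_nil_iff.2 (by simpa using hB)
        have hCf : C.filter p = [] := filter_eq_nil_iff.2 (by simpa using hC)
        simpa [hBf, hCf, hps] using hf
      · exact fun z hz => hW z (by simp [getLast?_append, getLast?_cons, Option.mem_def.1 hz])
      · exact fun z hz => hV z (by simp [getLast?_append, getLast?_cons, Option.mem_def.1 hz])
      · intro s₁ s₂ B' C' h₁ h₂ hB' hC' hW' hV'
        exact hblocks s₁ s₂ B' C' h₁ h₂ hB' hC' (hW'.trans ⟨t :: B, [], by simp⟩)
          (hV'.trans ⟨t :: C, [], by simp⟩)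
    rw [hBC, hWV₂]
termination_by W.length
decreasing_by subst_vars; simp; omega

end List

theorem Sparse.nodup_of_isInfix {W B : List ℕ} (hW : Sparse W) (hB : B <:+: W)
    (hlin : ∀ y ∈ B, W.count y ≠ 1) : B.Nodup := by
  obtain ⟨E, R, rfl⟩ := hB
  refine nodup_iff_getElem?_ne_getElem?.2 fun i j hij hj heq => ?_
  have hget {k : ℕ} (hk : k < B.length) : (E ++ B ++ R)[E.length + k]? = some B[k] := by
    rw [append_assoc, getElem?_append_right (by omega), Nat.add_sub_cancel_left,
      getElem?_append_left hk, getElem?_eq_getElem hk]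
  obtain ⟨y, hy, hyB⟩ := hW B[j] (E.length + i) (E.length + j) (by omega)
    (by rw [hget (by omega), ← getElem?_eq_getElem, heq, getElem?_eq_getElem hj]) (hget hj)
  rw [append_assoc, take_length_add_append, add_assoc, drop_length_add_append,
    take_append_of_le_length hj.le] at hyB
  exact hlin y (mem_of_mem_take (mem_of_mem_drop hyB)) hy

namespace ICmon

variable {m : ℕ}

@[simp] theorem one_toFun (i : Fin m) : (1 : ICmon m).toFun i = some i := rfl

@[simp] theorem mul_toFun (α β : ICmon m) (i : Fin m) :
    (α * β).toFun i = (α.toFun i).bind β.toFun := rfl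

theorem prod_toFun_eq_of_forall {L : List (ICmon m)} {i : Fin m}
    (h : ∀ α ∈ L, α.toFun i = some i) : L.prod.toFun i = some i := by
  induction L with
  | nil => rfl
  | cons α L ih => simp [h α (by simp), ih fun β hβ => h β (by simp [hβ])]

def single (i j : Fin m) (hij : i ≤ j) : ICmon m where
  toFun k := if k = i then some j else none
  inj' k l a := by split_ifs <;> simp_all
  mono' k l a b := by split_ifs <;> simp_all
  extv' k a := by split_ifs <;> grind

@[simp] theorem single_toFun (i j : Fin m) (hij : i ≤ j) (k : Fin m) :
    (single i j hij).toFun k = if k = i then some j else none := rfl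

end ICmon

theorem FreeSemigroup.lift_eq_prod {M : Type*} [Monoid M] (f : ℕ → M) (w : FreeSemigroup ℕ) :
    FreeSemigroup.lift f w = ((wToList w).map f).prod := by
  obtain ⟨a, l⟩ := w
  suffices ∀ c, l.foldl (· * f ·) c = c * (l.map f).prod from this (f a)
  induction l with
  | nil => simp
  | cons b l ih => simp [ih, mul_assoc]

namespace IC4

def shift12 : IC4 := ⟨![some 0, some 2, none, some 3], by decide, by decide, by decide⟩

def idOn023 : IC4 := ⟨![some 0, none, some 2, some 3], by decide, by decide, by decide⟩

def idOn03 : IC4 := ⟨![some 0, none, none, some 3], by decide, by decide, by decide⟩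

def absenceTest (x : ℕ) : ℕ → IC4 := Function.update 1 x idOn03

def orderTest (x y : ℕ) : ℕ → IC4 := Function.update (Function.update 1 y idOn023) x shift12

@[simp] theorem absenceTest_self (x : ℕ) : absenceTest x x = idOn03 := by simp [absenceTest]

@[simp] theorem absenceTest_of_ne {x a : ℕ} (h : a ≠ x) : absenceTest x a = 1 := by
  simp [absenceTest, h]

@[simp] theorem orderTest_left (x y : ℕ) : orderTest x y x = shift12 := by simp [orderTest]

@[simp] theorem orderTest_right {x y : ℕ} (h : y ≠ x) : orderTest x y y = idOn023 := by
  simp [orderTest, h]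

@[simp] theorem orderTest_of_ne {x y a : ℕ} (hx : a ≠ x) (hy : a ≠ y) : orderTest x y a = 1 := by
  simp [orderTest, hx, hy]

theorem absenceTest_fixes (x a : ℕ) {i : Fin 4} (hi : i = 0 ∨ i = 3) :
    (absenceTest x a).toFun i = some i := by
  unfold absenceTest
  rcases hi with rfl | rfl <;> simp only [Function.update_apply] <;> split_ifs <;> rfl

theorem orderTest_fixes (x y a : ℕ) {i : Fin 4} (hi : i = 0 ∨ i = 3) :
    (orderTest x y a).toFun i = some i := by
  unfold orderTest
  rcases hi with rfl | rfl <;> simp only [Function.update_apply] <;> split_ifs <;> rfl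

theorem prod_absenceTest_toFun_one (x : ℕ) (B : List ℕ) :
    (B.map (absenceTest x)).prod.toFun 1 = some 1 ↔ x ∉ B := by
  induction B with
  | nil => simp
  | cons a B ih =>
    by_cases hax : a = x
    · subst hax; simp [idOn03]
    · simp [hax, ih, Ne.symm hax]

theorem prod_orderTest_toFun_two (x y : ℕ) (B : List ℕ) :
    (B.map (orderTest x y)).prod.toFun 2 = some 2 ↔ x ∉ B := by
  induction B with
  | nil => simp
  | cons a B ih =>
    by_cases hax : a = x
    · subst hax; simp [shift12]
    · by_cases hay : a = y
      · subst hay; simp [idOn023, hax, ih, Ne.symm hax]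
      · simp [hax, hay, ih, Ne.symm hax]

theorem prod_orderTest_toFun_one (x y : ℕ) (B : List ℕ) :
    (B.map (orderTest x y)).prod.toFun 1 = some 2 ↔ B.count x = 1 ∧ ¬[y, x] <+ B := by
  induction B with
  | nil => simp
  | cons a B ih =>
    by_cases hax : a = x
    · subst hax
      have hB : a ∉ B → ¬[y, a] <+ B := fun h hs => h (hs.subset (by simp))
      simp +contextual [shift12, prod_orderTest_toFun_two, sublist_cons_iff, count_eq_zero, hB]
    · by_cases hay : a = y
      · subst hay
        have hB : B.count x = 1 → x ∈ B := fun h => count_pos_iff.1 (by omega)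
        simp +contextual [idOn023, hax, sublist_cons_iff, hB]
      · simp [hax, hay, ih, sublist_cons_iff, Ne.symm hay]

def bracket (g : ℕ → IC4) (t t' : ℕ) (s : Fin 4) : ℕ → IC4 :=
  Function.update (Function.update g t (ICmon.single 0 1 (by decide))) t'
    (ICmon.single s 3 (Fin.le_last s))

theorem prod_bracket_toFun_zero_eq_some_three_iff {L M : List ℕ} {t t' : ℕ} {g : ℕ → IC4}
    (hg0 : ∀ a, (g a).toFun 0 = some 0) (hg3 : ∀ a, (g a).toFun 3 = some 3) (s : Fin 4)
    (hM : t :: M ++ [t'] <:+: L) (ht : L.count t = 1) (ht' : L.count t' = 1) :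
    (L.map (bracket g t t' s)).prod.toFun 0 = some 3 ↔ (M.map g).prod.toFun 1 = some s := by
  obtain ⟨E, R, rfl⟩ := hM
  have htL : t ∉ E ++ (M ++ t' :: R) := notMem_of_count_eq_one (by simpa using ht)
  have ht'L : t' ∉ (E ++ t :: M) ++ R := notMem_of_count_eq_one (by simpa using ht')
  simp only [mem_append, mem_cons, not_or] at htL ht'L
  have hg {a : ℕ} (ha : a ≠ t) (ha' : a ≠ t') : bracket g t t' s a = g a := by
    simp [bracket, ha, ha']
  have hE : (E.map (bracket g t t' s)).prod.toFun 0 = some 0 :=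
    ICmon.prod_toFun_eq_of_forall <| forall_mem_map.2 fun a ha => by
      rw [hg (ne_of_mem_of_not_mem ha htL.1) (ne_of_mem_of_not_mem ha ht'L.1.1)]; exact hg0 a
  have hR : (R.map (bracket g t t' s)).prod.toFun 3 = some 3 :=
    ICmon.prod_toFun_eq_of_forall <| forall_mem_map.2 fun a ha => by
      rw [hg (ne_of_mem_of_not_mem ha htL.2.2.2) (ne_of_mem_of_not_mem ha ht'L.2)]; exact hg3 a
  have hMg : M.map (bracket g t t' s) = M.map g := map_congr_left fun a ha =>
    hg (ne_of_mem_of_not_mem ha htL.2.1) (ne_of_mem_of_not_mem ha ht'L.1.2.2)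
  have hgt : bracket g t t' s t = ICmon.single 0 1 (by decide) := by
    simp only [bracket, Function.update_of_ne htL.2.2.1, Function.update_self]
  have hgt' : bracket g t t' s t' = ICmon.single s 3 (Fin.le_last s) := by simp [bracket]
  simp only [append_assoc, cons_append, map_append, map_cons, prod_append, prod_cons, hMg, hgt,
    hgt', ICmon.mul_toFun, hE]
  simp [Option.bind_eq_some_iff, hR]

/-- What `IC₄` can observe of a factor placed between two linear letters
(`blockEquiv_of_isInfix`). -/
def BlockEquiv (B C : List ℕ) : Prop :=
  ∀ g : ℕ → IC4, (∀ a, (g a).toFun 0 = some 0) → (∀ a, (g a).toFun 3 = some 3) →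
    (B.map g).prod.toFun 1 = (C.map g).prod.toFun 1

theorem blockEquiv_of_isInfix {W V B C : List ℕ} {t t' : ℕ}
    (hWV : ∀ f : ℕ → IC4, (W.map f).prod = (V.map f).prod)
    (hB : t :: B ++ [t'] <:+: W) (hC : t :: C ++ [t'] <:+: V) (hWt : W.count t = 1)
    (hWt' : W.count t' = 1) (hVt : V.count t = 1) (hVt' : V.count t' = 1) : BlockEquiv B C :=
  fun g hg0 hg3 => Option.ext fun s => by
    rw [← prod_bracket_toFun_zero_eq_some_three_iff hg0 hg3 s hB hWt hWt',
      ← prod_bracket_toFun_zero_eq_some_three_iff hg0 hg3 s hC hVt hVt', hWV]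

namespace BlockEquiv

variable {B C : List ℕ}

theorem mem_iff (h : BlockEquiv B C) (x : ℕ) : x ∈ B ↔ x ∈ C := by
  rw [← not_iff_not, ← prod_absenceTest_toFun_one, ← prod_absenceTest_toFun_one,
    h _ (fun a => absenceTest_fixes x a (.inl rfl)) (fun a => absenceTest_fixes x a (.inr rfl))]

theorem count_eq_one_and_not_sublist_iff (h : BlockEquiv B C) (x y : ℕ) :
    B.count x = 1 ∧ ¬[y, x] <+ B ↔ C.count x = 1 ∧ ¬[y, x] <+ C := by
  rw [← prod_orderTest_toFun_one, ← prod_orderTest_toFun_one,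
    h _ (fun a => orderTest_fixes x y a (.inl rfl)) (fun a => orderTest_fixes x y a (.inr rfl))]

theorem count_eq_one_iff (h : BlockEquiv B C) (x : ℕ) : B.count x = 1 ↔ C.count x = 1 := by
  obtain ⟨y, hy⟩ := Infinite.exists_notMem_finset (B ++ C).toFinset
  simp only [mem_toFinset, mem_append, not_or] at hy
  have hB : ¬[y, x] <+ B := fun hs => hy.1 (hs.subset (mem_cons_self ..))
  have hC : ¬[y, x] <+ C := fun hs => hy.2 (hs.subset (mem_cons_self ..))
  simpa [hB, hC] using h.count_eq_one_and_not_sublist_iff x y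

theorem pair_sublist (h : BlockEquiv B C) {x y : ℕ} (hx : B.count x = 1) (hy : B.count y = 1)
    (hxy : [x, y] <+ B) : [x, y] <+ C := by
  have hne : x ≠ y := by
    rintro rfl
    have := replicate_sublist_iff.1 (show replicate 2 x <+ B from hxy)
    omega
  have hC := (h.count_eq_one_and_not_sublist_iff x y).1 ⟨hx, hxy.not_swap_pair hx.le hy.le⟩
  have hmem {z : ℕ} (hz : B.count z = 1) : z ∈ C := (h.mem_iff z).1 (count_pos_iff.1 (by omega))
  exact (pair_sublist_or_pair_sublist (hmem hx) (hmem hy) hne).resolve_right hC.2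

theorem filter_eq (h : BlockEquiv B C) (p : ℕ → Bool) (hp : ∀ z ∈ B, p z → B.count z = 1) :
    B.filter p = C.filter p := by
  have nodup_filter {L : List ℕ} (hL : ∀ z ∈ L, p z → L.count z = 1) : (L.filter p).Nodup := by
    refine nodup_iff_count_le_one.2 fun z => ?_
    by_cases hz : z ∈ L.filter p
    · rw [mem_filter] at hz
      rw [count_filter hz.2, hL z hz.1 hz.2]
    · rw [count_eq_zero.2 hz]; omega
  refine eq_of_nodup_of_pair_sublist (nodup_filter hp) (nodup_filter fun z hz hpz => ?_)
    (fun z => by simp [mem_filter, h.mem_iff]) fun a b hab => ?_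
  · exact (h.count_eq_one_iff z).1 (hp z ((h.mem_iff z).2 hz) hpz)
  · have hpa : p a := (mem_filter.1 (hab.subset (by simp))).2
    have hpb : p b := (mem_filter.1 (hab.subset (by simp))).2
    have hB := hab.trans filter_sublist
    have := (h.pair_sublist (hp a (hB.subset (by simp)) hpa) (hp b (hB.subset (by simp)) hpb)
      hB).filter p
    simpa [hpa, hpb] using this

theorem eq_of_nodup (h : BlockEquiv B C) (hB : B.Nodup) : B = C := by
  simpa using h.filter_eq (fun _ => true) fun z hz _ => count_eq_one_of_mem hB hz

end BlockEquiv

end IC4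

theorem Sparse.eq_of_forall_prod_map_eq {W V : List ℕ} (hW : Sparse W)
    (hWV : ∀ f : ℕ → IC4, (W.map f).prod = (V.map f).prod) : W = V := by
  -- Fresh letters `a`, `b` at both ends put every factor of interest between two linear letters.
  obtain ⟨a, ha⟩ := Infinite.exists_notMem_finset (W ++ V).toFinset
  obtain ⟨b, hb⟩ := Infinite.exists_notMem_finset (a :: (W ++ V)).toFinset
  simp only [mem_toFinset, mem_cons, mem_append, not_or] at ha hb
  set W' := a :: (W ++ [b])
  set V' := a :: (V ++ [b])
  have hWV' (f : ℕ → IC4) : (W'.map f).prod = (V'.map f).prod := by simp [W', V', hWV f]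
  have hequiv : IC4.BlockEquiv W' V' := fun g _ _ => by rw [hWV' g]
  have hcount {z : ℕ} (hza : z ≠ a) (hzb : z ≠ b) : W'.count z = W.count z := by
    simp [W', Ne.symm hza, Ne.symm hzb]
  set p : ℕ → Bool := fun z => W'.count z = 1
  have hpa : p a := by simp [p, W', count_eq_zero.2 ha.1, hb.1]
  have hpb : p b := by simp [p, W', count_eq_zero.2 hb.2.1, Ne.symm hb.1]
  have hlin {z : ℕ} (hz : p z) : W'.count z = 1 ∧ V'.count z = 1 := by
    simp only [p, decide_eq_true_eq] at hz
    exact ⟨hz, (hequiv.count_eq_one_iff z).1 hz⟩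
  suffices W ++ [b] = V ++ [b] from append_cancel_right this
  refine eq_of_filter_eq_of_blocks_eq p hpa ?_ (by simpa using hpb) (by simpa using hpb) ?_
  · simpa [W', V', hpa] using hequiv.filter_eq p fun z _ hz => (hlin hz).1
  intro s s' B C hs hs' hBp _ hBW hCV
  have hBC := IC4.blockEquiv_of_isInfix hWV' hBW hCV (hlin hs).1 (hlin hs').1 (hlin hs).2
    (hlin hs').2
  refine hBC.eq_of_nodup (hW.nodup_of_isInfix ?_ fun y hy => ?_)
  · exact (infix_iff_prefix_suffix .. |>.2 ⟨_, ⟨[s'], rfl⟩, ⟨[s], rfl⟩⟩ |>.trans hBW)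
      |>.of_cons_append_singleton (fun h => hBp a h hpa) (fun h => hBp b h hpb)
  · have hya : y ≠ a := by rintro rfl; exact hBp y hy hpa
    have hyb : y ≠ b := by rintro rfl; exact hBp y hy hpb
    simpa [p, hcount hya hyb] using hBp y hy

/-- **Every sparse word is an isoterm for the monoid `IC₄`**: if `w` is a sparse word and
`IC₄` satisfies the identity `w ≈ v`, then `v = w`. -/
theorem sparse_isoterm_IC4 (w v : FreeSemigroup ℕ) (hw : Sparse (wToList w))
    (h : Satisfies IC4 w v) : v = w := by
  have hWV := hw.eq_of_forall_prod_map_eq fun f => by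
    simpa only [FreeSemigroup.lift_eq_prod] using h f
  obtain ⟨_, _⟩ := w
  obtain ⟨_, _⟩ := v
  simp_all [wToList]
end

section
/- A finite semigroup S does not belong to the pseudovariety DS if and only if the direct product S × S has the semigroup B_2 as a divisor. -/
/-! ### Green's relations and the pseudovarieties `DS` and `LDS` -/

section Green
variable {S : Type*} [Semigroup S]

/-- The principal right ideal `xS¹ = {x} ∪ xS`. -/
def rIdeal (x : S) : Set S := insert x {z | ∃ u, x * u = z}

/-- The principal left ideal `S¹x = {x} ∪ Sx`. -/
def lIdeal (x : S) : Set S := insert x {z | ∃ u, u * x = z}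

/-- Green's relation `R`: `x R y` iff `xS¹ = yS¹`. -/
def GreenR (x y : S) : Prop := rIdeal x = rIdeal y

/-- Green's relation `L`: `x L y` iff `S¹x = S¹y`. -/
def GreenL (x y : S) : Prop := lIdeal x = lIdeal y

/-- Green's relation `D = R ∘ L`. -/
def GreenD (x y : S) : Prop := ∃ z, GreenR x z ∧ GreenL z y

/-- The local subsemigroup `eSe = {ese : s ∈ S}` of `S` (the local submonoid at `e` when `e`
is idempotent). -/
def localSub (e : S) : Subsemigroup S where
  carrier := {x | ∃ s : S, x = e * s * e}
  mul_mem' := by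
    rintro a b ⟨s, rfl⟩ ⟨t, rfl⟩
    exact ⟨s * e * (e * t), by simp [mul_assoc]⟩

end Green

/-- Membership in the pseudovariety `DS`: every `D`-class containing an idempotent is closed
under multiplication. -/
def MemDS (S : Type*) [Semigroup S] [Finite S] : Prop :=
  ∀ e x y : S, e * e = e → GreenD x e → GreenD y e → GreenD (x * y) e

/-- Membership in the pseudovariety `LDS`: every local submonoid `eSe` (for `e` idempotent)
lies in `DS`. -/
def MemLDS (S : Type*) [Semigroup S] [Finite S] : Prop :=
  ∀ e : S, e * e = e → MemDS (localSub e)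

/-! ### The Brandt semigroup `B₂` and Brandt monoid `B₂¹` -/

/-- The five-element Brandt semigroup: the four `2 × 2` matrix units `E11, E12, E21, E22`
together with the zero matrix, under matrix multiplication. -/
def B2sub : Subsemigroup (Matrix (Fin 2) (Fin 2) (ZMod 2)) where
  carrier := {A | (∃ i j, A = Matrix.single i j 1) ∨ A = 0}
  mul_mem' := by
    rintro a b (⟨i, j, rfl⟩ | rfl) hb
    · rcases hb with ⟨k, l, rfl⟩ | rfl
      · by_cases h : j = k
        · subst h
          exact Or.inl ⟨i, l, by rw [Matrix.single_mul_single_same]; norm_num⟩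
        · exact Or.inr (by simp [h])
      · exact Or.inr (by simp)
    · exact Or.inr (by simp)

/-- The Brandt semigroup `B₂` as a type. -/
abbrev B2 := ↥B2sub

/-- The six-element Brandt monoid: `B₂` with the `2 × 2` identity matrix adjoined. -/
def B21sub : Subsemigroup (Matrix (Fin 2) (Fin 2) (ZMod 2)) where
  carrier := {A | A = 1 ∨ (∃ i j, A = Matrix.single i j 1) ∨ A = 0}
  mul_mem' := by
    rintro a b (rfl | ⟨i, j, rfl⟩ | rfl) hb
    · simpa using hb
    · rcases hb with rfl | ⟨k, l, rfl⟩ | rfl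
      · exact Or.inr (Or.inl ⟨i, j, by simp⟩)
      · by_cases h : j = k
        · subst h
          exact Or.inr (Or.inl ⟨i, l, by rw [Matrix.single_mul_single_same]; norm_num⟩)
        · exact Or.inr (Or.inr (by simp [h]))
      · exact Or.inr (Or.inr (by simp))
    · exact Or.inr (Or.inr (by simp))

/-- The Brandt monoid `B₂¹` as a type. -/
abbrev B21 := ↥B21sub

/-- The identity matrix is the identity element of `B₂¹`. -/
instance : One B21 := ⟨⟨1, Or.inl rfl⟩⟩

/-- `T` is a divisor of `S`: `T` is a homomorphic image of a subsemigroup of `S`. -/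
def IsDivisor (T S : Type*) [Semigroup T] [Semigroup S] : Prop :=
  ∃ (U : Subsemigroup S) (f : U →ₙ* T), Function.Surjective f

/-!
If `S ∉ DS`, a regular `D`-class of `S` contains idempotents `g = ab` and `h = ba`, with `aba = a`
and `bab = b`, whose product `gh` falls out of it; then `b² = b(gh)b` lies strictly `J`-below `g`.
In `S × S` the pairs `(ab, ba), (a, b), (b, a), (ba, ab)` multiply like the matrix units of `B₂`
modulo the ideal of pairs having a coordinate `J`-below `b²`. The second coordinate, with `a` and
`b` exchanged, is why the square `S × S` is needed: only `b²`, not `a²`, is known to be that low.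

Conversely, `DS` satisfies `((xy)^ω (yx)^ω (xy)^ω)^ω = (xy)^ω`: the idempotents `(xy)^ω` and
`(yx)^ω` are `J`-equivalent, so every power of their product stays in the `D`-class of `(xy)^ω`,
and stability of finite monoids forces its idempotent power to be `(xy)^ω` itself. The identity
passes to finite products, subsemigroups and quotients, and fails in `B₂` at `x = E₁₂`, `y = E₂₁`.
-/

open Subsemigroup

section IdempotentPow

/-- `e` is the idempotent power `x^ω` of `x` (unique by `IsIdempotentPow.unique`). -/
def IsIdempotentPow {S : Type*} [Semigroup S] (e x : S) : Prop :=
  e ∈ closure {x} ∧ IsIdempotentElem e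

theorem exists_isIdempotentPow {S : Type*} [Semigroup S] [Finite S] (x : S) :
    ∃ e, IsIdempotentPow e x := by
  let _ : TopologicalSpace S := ⊥
  have : DiscreteTopology S := ⟨rfl⟩
  exact exists_idempotent_in_compact_subsemigroup (fun _ => continuous_of_discreteTopology) _
    ⟨x, subset_closure rfl⟩ (Set.toFinite _).isCompact fun _ ha _ hb => mul_mem ha hb

theorem map_mem_closure_singleton {S T : Type*} [Semigroup S] [Semigroup T] (φ : S →ₙ* T)
    {x z : S} (hz : z ∈ closure {x}) : φ z ∈ closure {φ x} := by
  rw [← Set.image_singleton, ← MulHom.map_mclosure]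
  exact mem_map_of_mem φ hz

theorem exists_pow_succ_eq_of_mem_closure {M : Type*} [Monoid M] {x z : M}
    (hz : z ∈ closure {x}) : ∃ n, x ^ (n + 1) = z := by
  induction hz using closure_induction with
  | mem z hz => exact ⟨0, by rw [Set.mem_singleton_iff.1 hz, pow_one]⟩
  | mul a b _ _ ha hb =>
    obtain ⟨n, rfl⟩ := ha
    obtain ⟨m, rfl⟩ := hb
    exact ⟨n + m + 1, by rw [← pow_add]; ring_nf⟩

theorem exists_isIdempotentElem_pow_succ {M : Type*} [Monoid M] [Finite M] (x : M) :
    ∃ n, IsIdempotentElem (x ^ (n + 1)) := by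
  obtain ⟨e, he, he_idem⟩ := exists_isIdempotentPow x
  obtain ⟨n, rfl⟩ := exists_pow_succ_eq_of_mem_closure he
  exact ⟨n, he_idem⟩

theorem IsIdempotentElem.pow_succ_eq_pow_succ {M : Type*} [Monoid M] {x : M} {n m : ℕ}
    (hn : IsIdempotentElem (x ^ (n + 1))) (hm : IsIdempotentElem (x ^ (m + 1))) :
    x ^ (n + 1) = x ^ (m + 1) := by
  rw [← hn.pow_succ_eq m, ← hm.pow_succ_eq n, ← pow_mul, ← pow_mul, mul_comm]

end IdempotentPow

section GreenMonoid

variable {M : Type*} [Monoid M]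

/- Green's preorders of a monoid; those of a semigroup `S` are read in `S¹ = WithOne S`
(`greenD_iff`). -/

def RLe (a b : M) : Prop := ∃ u, a = b * u

def LLe (a b : M) : Prop := ∃ u, a = u * b

def JLe (a b : M) : Prop := ∃ u v, a = u * b * v

def REquiv (a b : M) : Prop := RLe a b ∧ RLe b a

def LEquiv (a b : M) : Prop := LLe a b ∧ LLe b a

def JEquiv (a b : M) : Prop := JLe a b ∧ JLe b a

def DEquiv (a b : M) : Prop := ∃ c, REquiv a c ∧ LEquiv c b

theorem RLe.refl (a : M) : RLe a a := ⟨1, (mul_one a).symm⟩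

theorem LLe.refl (a : M) : LLe a a := ⟨1, (one_mul a).symm⟩

theorem JLe.refl (a : M) : JLe a a := ⟨1, 1, by simp⟩

theorem RLe.trans {a b c : M} (hab : RLe a b) (hbc : RLe b c) : RLe a c := by
  obtain ⟨u, rfl⟩ := hab
  obtain ⟨v, rfl⟩ := hbc
  exact ⟨v * u, mul_assoc _ _ _⟩

theorem LLe.trans {a b c : M} (hab : LLe a b) (hbc : LLe b c) : LLe a c := by
  obtain ⟨u, rfl⟩ := hab
  obtain ⟨v, rfl⟩ := hbc
  exact ⟨u * v, (mul_assoc _ _ _).symm⟩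

theorem JLe.trans {a b c : M} (hab : JLe a b) (hbc : JLe b c) : JLe a c := by
  obtain ⟨u, v, rfl⟩ := hab
  obtain ⟨p, q, rfl⟩ := hbc
  exact ⟨u * p, q * v, by simp only [mul_assoc]⟩

theorem JLe.mul_right {a b : M} (h : JLe a b) (c : M) : JLe (a * c) b := by
  obtain ⟨u, v, rfl⟩ := h
  exact ⟨u, v * c, by simp only [mul_assoc]⟩

theorem JLe.mul_left {a b : M} (h : JLe a b) (c : M) : JLe (c * a) b := by
  obtain ⟨u, v, rfl⟩ := h
  exact ⟨c * u, v, by simp only [mul_assoc]⟩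

theorem JEquiv.symm {a b : M} (h : JEquiv a b) : JEquiv b a := ⟨h.2, h.1⟩

theorem JEquiv.trans {a b c : M} (hab : JEquiv a b) (hbc : JEquiv b c) : JEquiv a c :=
  ⟨hab.1.trans hbc.1, hbc.2.trans hab.2⟩

theorem DEquiv.jEquiv {a b : M} (h : DEquiv a b) : JEquiv a b := by
  obtain ⟨c, ⟨⟨p, hp⟩, ⟨q, hq⟩⟩, ⟨⟨r, hr⟩, ⟨s, hs⟩⟩⟩ := h
  exact ⟨⟨r, p, by rw [hp, hr]⟩, ⟨s, q, by rw [hs, hq, mul_assoc]⟩⟩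

theorem eq_pow_mul_mul_pow {u y w : M} (h : y = u * y * w) : ∀ k : ℕ, y = u ^ k * y * w ^ k
  | 0 => by simp
  | k + 1 => by
    conv_lhs => rw [eq_pow_mul_mul_pow h k, h]
    rw [pow_succ, pow_succ']
    simp only [mul_assoc]

theorem exists_eq_mul_mul_right [Finite M] {u y w : M} (h : y = u * y * w) :
    ∃ c, y = y * w * c := by
  obtain ⟨n, hn⟩ := exists_isIdempotentElem_pow_succ w
  refine ⟨w ^ n, ?_⟩
  calc y = u ^ (n + 1) * y * w ^ (n + 1) := eq_pow_mul_mul_pow h _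
    _ = u ^ (n + 1) * y * w ^ (n + 1) * w ^ (n + 1) := by rw [mul_assoc _ (w ^ (n + 1)), hn.eq]
    _ = y * w * w ^ n := by rw [← eq_pow_mul_mul_pow h, mul_assoc, ← pow_succ']

theorem exists_eq_mul_mul_left [Finite M] {u y w : M} (h : y = u * y * w) :
    ∃ c, y = c * u * y := by
  obtain ⟨n, hn⟩ := exists_isIdempotentElem_pow_succ u
  refine ⟨u ^ n, ?_⟩
  calc y = u ^ (n + 1) * y * w ^ (n + 1) := eq_pow_mul_mul_pow h _
    _ = u ^ (n + 1) * (u ^ (n + 1) * y * w ^ (n + 1)) := by simp only [← mul_assoc, hn.eq]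
    _ = u ^ n * u * y := by rw [← eq_pow_mul_mul_pow h, pow_succ]

theorem RLe.rLe_of_jLe [Finite M] {x y : M} (hxy : RLe x y) (hyx : JLe y x) : RLe y x := by
  obtain ⟨t, rfl⟩ := hxy
  obtain ⟨u, v, huv⟩ := hyx
  obtain ⟨c, hc⟩ :=
    exists_eq_mul_mul_right (u := u) (w := t * v) (huv.trans (by simp only [mul_assoc]))
  exact ⟨v * c, hc.trans (by simp only [mul_assoc])⟩

theorem LLe.lLe_of_jLe [Finite M] {x y : M} (hxy : LLe x y) (hyx : JLe y x) : LLe y x := by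
  obtain ⟨t, rfl⟩ := hxy
  obtain ⟨u, v, huv⟩ := hyx
  obtain ⟨c, hc⟩ :=
    exists_eq_mul_mul_left (u := u * t) (w := v) (huv.trans (by simp only [mul_assoc]))
  exact ⟨c * u, hc.trans (by simp only [mul_assoc])⟩

theorem JEquiv.dEquiv [Finite M] {x y : M} (h : JEquiv x y) : DEquiv x y := by
  obtain ⟨⟨s, t, hst⟩, ⟨u, v, huv⟩⟩ := h
  have hxz : RLe x (s * y) := ⟨t, hst⟩
  have hzy : LLe (s * y) y := ⟨s, rfl⟩
  refine ⟨s * y, ⟨hxz, hxz.rLe_of_jLe ⟨s * u, v, ?_⟩⟩, ⟨hzy, hzy.lLe_of_jLe ⟨u, t * v, ?_⟩⟩⟩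
  · exact (congrArg (s * ·) huv).trans (by simp only [mul_assoc])
  · exact huv.trans (by rw [hst]; simp only [mul_assoc])

theorem eq_of_jLe_of_mul_eq [Finite M] {e g : M} (hg : IsIdempotentElem g) (hge : g * e = g)
    (heg : e * g = g) (hJ : JLe e g) : g = e := by
  obtain ⟨u, hu⟩ := RLe.rLe_of_jLe ⟨g, heg.symm⟩ hJ
  rw [← hge, hu, ← mul_assoc, hg.eq]

end GreenMonoid

section RegularDClass

variable {M : Type*} [Monoid M]

theorem DEquiv.exists_mul_mul_eq {x e : M} (h : DEquiv x e) (he : IsIdempotentElem e) :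
    ∃ w, x * w * x = x := by
  obtain ⟨z, ⟨⟨p, hp⟩, ⟨q, hq⟩⟩, ⟨⟨r, hr⟩, ⟨s, hs⟩⟩⟩ := h
  have hze : z * e = z := by rw [hr, mul_assoc, he.eq]
  refine ⟨q * s, ?_⟩
  calc x * (q * s) * x = z * s * (z * p) := by rw [← mul_assoc, ← hq, ← hp]
    _ = z * e * p := by rw [hs]; simp only [mul_assoc]
    _ = x := by rw [hze, hp]

theorem DEquiv.exists_brandt_pair {g h : M} (hgh : DEquiv g h) (hg : IsIdempotentElem g)
    (hh : IsIdempotentElem h) :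
    ∃ a b : M, a * b = g ∧ b * a = h ∧ a * b * a = a ∧ b * a * b = b := by
  obtain ⟨z, ⟨⟨p, hp⟩, ⟨q, hq⟩⟩, ⟨⟨r, hr⟩, ⟨s, hs⟩⟩⟩ := hgh
  have hgz : g * z = z := by rw [hq, ← mul_assoc, hg.eq]
  have hzh : z * h = z := by rw [hr, mul_assoc, hh.eq]
  have hab : z * (h * p * g) = g := by
    rw [← mul_assoc, ← mul_assoc, hzh, ← hp, hg.eq]
  have hba : h * p * g * z = h := by
    rw [mul_assoc _ g, hgz, hs]
    simp only [mul_assoc]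
    rw [← mul_assoc z p, ← hp, hgz]
  refine ⟨z, h * p * g, hab, hba, by rw [hab, hgz], by rw [hba, ← mul_assoc, ← mul_assoc, hh.eq]⟩

theorem jLe_pow_succ_of_isIdempotentElem {x y : M} {n : ℕ}
    (h : IsIdempotentElem ((x * y) ^ (n + 1))) (m : ℕ) :
    JLe ((x * y) ^ (n + 1)) ((y * x) ^ (m + 1)) := by
  refine ⟨(x * y) ^ (n * (m + 2)) * x, y, ?_⟩
  calc (x * y) ^ (n + 1) = ((x * y) ^ (n + 1)) ^ (m + 2) := (h.pow_succ_eq (m + 1)).symm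
    _ = (x * y) ^ (n * (m + 2)) * ((x * y) ^ (m + 1) * x) * y := by
      rw [← pow_mul, show (n + 1) * (m + 2) = n * (m + 2) + (m + 1) + 1 by ring, pow_succ,
        pow_add]
      simp only [mul_assoc]
    _ = (x * y) ^ (n * (m + 2)) * x * (y * x) ^ (m + 1) * y := by
      rw [mul_pow_mul]; simp only [mul_assoc]

theorem exists_brandt_pair_of_not_dEquiv_mul [Finite M] {e x y : M}
    (he : IsIdempotentElem e) (hx : DEquiv x e) (hy : DEquiv y e) (hxy : ¬ DEquiv (x * y) e) :
    ∃ a b : M, a * b * a = a ∧ b * a * b = b ∧ ¬ JLe (a * b) (b * b) := by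
  obtain ⟨w, hw⟩ := hx.exists_mul_mul_eq he
  obtain ⟨w', hw'⟩ := hy.exists_mul_mul_eq he
  have hg : IsIdempotentElem (w * x) := by
    rw [IsIdempotentElem, mul_assoc, ← mul_assoc x, hw]
  have hh : IsIdempotentElem (y * w') := by
    rw [IsIdempotentElem, ← mul_assoc, hw']
  have hgx : JEquiv (w * x) x := ⟨⟨w, 1, by simp⟩, ⟨x, 1, by rw [mul_one, ← mul_assoc, hw]⟩⟩
  have hhy : JEquiv (y * w') y := ⟨⟨1, w', by simp⟩, ⟨1, y, by rw [one_mul, hw']⟩⟩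
  obtain ⟨a, b, hab, hba, haba, hbab⟩ :=
    ((hgx.trans hx.jEquiv).trans (hhy.trans hy.jEquiv).symm).dEquiv.exists_brandt_pair hg hh
  refine ⟨a, b, haba, hbab, fun hle => hxy (JEquiv.dEquiv ?_)⟩
  have hxy_gh : JEquiv (x * y) (a * b * (b * a)) := by
    rw [hab, hba]
    refine ⟨⟨x, y, ?_⟩, ⟨w, w', by simp only [mul_assoc]⟩⟩
    calc x * y = x * w * x * (y * w' * y) := by rw [hw, hw']
      _ = x * (w * x * (y * w')) * y := by simp only [mul_assoc]
  have hbb : JLe (b * b) (a * b * (b * a)) := ⟨b, b, by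
    calc b * b = b * a * b * (b * a * b) := by rw [hbab]
      _ = b * (a * b * (b * a)) * b := by simp only [mul_assoc]⟩
  have hgh_g : JEquiv (a * b * (b * a)) (a * b) := ⟨(JLe.refl _).mul_right _, hle.trans hbb⟩
  exact hxy_gh.trans (hgh_g.trans (hab ▸ hgx.trans hx.jEquiv))

end RegularDClass

section Bridge

variable {S : Type*} [Semigroup S]

instance WithOne.finite [Finite S] : Finite (WithOne S) := inferInstanceAs (Finite (Option S))

theorem WithOne.coe_mul_ne_one (x : S) (u : WithOne S) : (x : WithOne S) * u ≠ 1 := by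
  cases u <;> simp [← WithOne.coe_mul]

theorem mem_rIdeal_iff {x z : S} : z ∈ rIdeal x ↔ RLe (z : WithOne S) x := by
  constructor
  · rintro (rfl | ⟨u, rfl⟩)
    exacts [RLe.refl _, ⟨u, WithOne.coe_mul x u⟩]
  · rintro ⟨u, hu⟩
    cases u with
    | one => exact Or.inl (WithOne.coe_injective (by simpa using hu))
    | coe u => exact Or.inr ⟨u, WithOne.coe_injective hu.symm⟩

theorem mem_lIdeal_iff {x z : S} : z ∈ lIdeal x ↔ LLe (z : WithOne S) x := by
  constructor
  · rintro (rfl | ⟨u, rfl⟩)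
    exacts [LLe.refl _, ⟨u, WithOne.coe_mul u x⟩]
  · rintro ⟨u, hu⟩
    cases u with
    | one => exact Or.inl (WithOne.coe_injective (by simpa using hu))
    | coe u => exact Or.inr ⟨u, WithOne.coe_injective hu.symm⟩

theorem rIdeal_subset_rIdeal_iff {x y : S} : rIdeal x ⊆ rIdeal y ↔ RLe (x : WithOne S) y :=
  ⟨fun h => mem_rIdeal_iff.1 (h (Set.mem_insert x _)),
    fun h _ hz => mem_rIdeal_iff.2 ((mem_rIdeal_iff.1 hz).trans h)⟩

theorem lIdeal_subset_lIdeal_iff {x y : S} : lIdeal x ⊆ lIdeal y ↔ LLe (x : WithOne S) y :=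
  ⟨fun h => mem_lIdeal_iff.1 (h (Set.mem_insert x _)),
    fun h _ hz => mem_lIdeal_iff.2 ((mem_lIdeal_iff.1 hz).trans h)⟩

theorem greenR_iff {x y : S} : GreenR x y ↔ REquiv (x : WithOne S) y := by
  rw [GreenR, Set.Subset.antisymm_iff, rIdeal_subset_rIdeal_iff, rIdeal_subset_rIdeal_iff]
  rfl

theorem greenL_iff {x y : S} : GreenL x y ↔ LEquiv (x : WithOne S) y := by
  rw [GreenL, Set.Subset.antisymm_iff, lIdeal_subset_lIdeal_iff, lIdeal_subset_lIdeal_iff]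
  rfl

theorem greenD_iff {x y : S} : GreenD x y ↔ DEquiv (x : WithOne S) y := by
  constructor
  · rintro ⟨z, hR, hL⟩
    exact ⟨z, greenR_iff.1 hR, greenL_iff.1 hL⟩
  · rintro ⟨z, hR, hL⟩
    obtain ⟨u, hu⟩ := hR.2
    obtain ⟨z, rfl⟩ := WithOne.ne_one_iff_exists.1 (hu ▸ WithOne.coe_mul_ne_one x u)
    exact ⟨z, greenR_iff.2 hR, greenL_iff.2 hL⟩

end Bridge

/-- In the Rees quotient `T / I`, the elements `σ i j` multiply like the matrix units of `B₂`. -/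
structure IsMatrixUnitsModulo {T : Type*} [Semigroup T] (I : Set T) (σ : Fin 2 → Fin 2 → T) :
    Prop where
  mul_mem_left : ∀ x y, y ∈ I → x * y ∈ I
  mul_mem_right : ∀ x y, x ∈ I → x * y ∈ I
  mul_eq : ∀ i j k, σ i j * σ j k = σ i k
  mul_mem_of_ne : ∀ i j k l, j ≠ k → σ i j * σ k l ∈ I
  notMem_zero_zero : σ 0 0 ∉ I

namespace IsMatrixUnitsModulo

variable {T : Type*} [Semigroup T] {I : Set T} {σ : Fin 2 → Fin 2 → T}

theorem notMem (h : IsMatrixUnitsModulo I σ) (i j : Fin 2) : σ i j ∉ I := fun hij =>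
  h.notMem_zero_zero <| by
    rw [← h.mul_eq 0 i 0, ← h.mul_eq i j 0]
    exact h.mul_mem_left _ _ (h.mul_mem_right _ _ hij)

theorem eq_iff (h : IsMatrixUnitsModulo I σ) {i j k l : Fin 2} :
    σ i j = σ k l ↔ i = k ∧ j = l := by
  refine ⟨fun hσ => ⟨?_, ?_⟩, fun ⟨hik, hjl⟩ => hik ▸ hjl ▸ rfl⟩
  · by_contra hik
    apply h.notMem i j
    rw [← h.mul_eq i i j, hσ]
    exact h.mul_mem_of_ne i i k l hik
  · by_contra hjl
    apply h.notMem i j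
    rw [← h.mul_eq i j j, hσ]
    exact h.mul_mem_of_ne k l j j (Ne.symm hjl)

def subsemigroup (h : IsMatrixUnitsModulo I σ) : Subsemigroup T where
  carrier := {p | (∃ i j, σ i j = p) ∨ p ∈ I}
  mul_mem' := by
    rintro _ _ (⟨i, j, rfl⟩ | hp) (⟨k, l, rfl⟩ | hq)
    · by_cases hjk : j = k
      · exact Or.inl ⟨i, l, by rw [hjk, h.mul_eq]⟩
      · exact Or.inr (h.mul_mem_of_ne i j k l hjk)
    all_goals first
      | exact Or.inr (h.mul_mem_left _ _ hq)
      | exact Or.inr (h.mul_mem_right _ _ hp)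

theorem isDivisor_B2 (h : IsMatrixUnitsModulo I σ) : IsDivisor B2 T := by
  classical
  let F : T → Matrix (Fin 2) (Fin 2) (ZMod 2) := fun p =>
    Matrix.of fun i j => if σ i j = p then 1 else 0
  have F_unit : ∀ i j, F (σ i j) = Matrix.single i j 1 := by
    intro i j
    ext k l
    simp [F, h.eq_iff, Matrix.single_apply, eq_comm]
  have F_mem : ∀ p ∈ I, F p = 0 := by
    intro p hp
    ext k l
    simp only [F, Matrix.of_apply, Matrix.zero_apply, ite_eq_right_iff]
    rintro rfl
    exact (h.notMem k l hp).elim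
  have F_mul : ∀ p ∈ h.subsemigroup, ∀ q ∈ h.subsemigroup, F (p * q) = F p * F q := by
    rintro _ (⟨i, j, rfl⟩ | hp) _ (⟨k, l, rfl⟩ | hq)
    · by_cases hjk : j = k
      · subst hjk
        rw [h.mul_eq, F_unit, F_unit, F_unit, Matrix.single_mul_single_same, mul_one]
      · rw [F_mem _ (h.mul_mem_of_ne i j k l hjk), F_unit, F_unit,
          Matrix.single_mul_single_of_ne (h := hjk)]
    all_goals first
      | rw [F_mem _ (h.mul_mem_left _ _ hq), F_mem _ hq, mul_zero]
      | rw [F_mem _ (h.mul_mem_right _ _ hp), F_mem _ hp, zero_mul]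
  have F_B2 : ∀ p ∈ h.subsemigroup, F p ∈ B2sub := by
    rintro _ (⟨i, j, rfl⟩ | hp)
    exacts [Or.inl ⟨i, j, F_unit i j⟩, Or.inr (F_mem _ hp)]
  have h01 : σ 0 0 * σ 1 1 ∈ I := h.mul_mem_of_ne 0 0 1 1 (by decide)
  refine ⟨h.subsemigroup,
    ⟨fun p => ⟨F p, F_B2 p p.2⟩, fun p q => Subtype.ext (F_mul p p.2 q q.2)⟩, ?_⟩
  rintro ⟨_, ⟨i, j, rfl⟩ | rfl⟩
  · exact ⟨⟨σ i j, Or.inl ⟨i, j, rfl⟩⟩, Subtype.ext (F_unit i j)⟩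
  · exact ⟨⟨σ 0 0 * σ 1 1, Or.inr h01⟩, Subtype.ext (F_mem _ h01)⟩

end IsMatrixUnitsModulo

section BrandtPair

variable {S : Type*} [Semigroup S]

def brandtUnits (a b : S) : Fin 2 → Fin 2 → S := ![![a * b, a], ![b, b * a]]

theorem brandtUnits_mul {a b : S} (haba : a * b * a = a) (hbab : b * a * b = b) (i j k : Fin 2) :
    brandtUnits a b i j * brandtUnits a b j k = brandtUnits a b i k := by
  fin_cases i <;> fin_cases j <;> fin_cases k <;> simp [brandtUnits, ← mul_assoc, haba, hbab]

theorem isMatrixUnitsModulo_brandtUnits_prod {a b : S} {I : Set S}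
    (hI_left : ∀ x y, y ∈ I → x * y ∈ I) (hI_right : ∀ x y, x ∈ I → x * y ∈ I)
    (haba : a * b * a = a) (hbab : b * a * b = b) (hbb : b * b ∈ I) (hab : a * b ∉ I) :
    IsMatrixUnitsModulo {p : S × S | p.1 ∈ I ∨ p.2 ∈ I}
      fun i j => (brandtUnits a b i j, brandtUnits a b i.rev j.rev) := by
  have h01 : ∀ i l, brandtUnits a b i 0 * brandtUnits a b 1 l ∈ I := by
    intro i l
    rw [← brandtUnits_mul haba hbab i 1 0, ← brandtUnits_mul haba hbab 1 0 l]
    change brandtUnits a b i 1 * b * (b * brandtUnits a b 0 l) ∈ I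
    rw [mul_assoc, ← mul_assoc b]
    exact hI_left _ _ (hI_right _ _ hbb)
  refine ⟨?_, ?_, fun i j k =>
    Prod.ext (brandtUnits_mul haba hbab i j k) (brandtUnits_mul haba hbab i.rev j.rev k.rev),
    ?_, ?_⟩
  · rintro x y (hy | hy)
    exacts [Or.inl (hI_left _ _ hy), Or.inr (hI_left _ _ hy)]
  · rintro x y (hx | hx)
    exacts [Or.inl (hI_right _ _ hx), Or.inr (hI_right _ _ hx)]
  · intro i j k l hjk
    obtain ⟨rfl, rfl⟩ | ⟨rfl, rfl⟩ : j = 0 ∧ k = 1 ∨ j = 1 ∧ k = 0 := by omega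
    exacts [Or.inl (h01 i l), Or.inr (h01 i.rev l.rev)]
  · rintro (h | (h : b * a ∈ I))
    · exact hab h
    · have h' := hI_right _ b (hI_left a _ h)
      rw [← mul_assoc, haba] at h'
      exact hab h'

end BrandtPair

theorem isDivisor_B2_prod_of_not_memDS {S : Type*} [Semigroup S] [Finite S] (hS : ¬ MemDS S) :
    IsDivisor B2 (S × S) := by
  simp only [MemDS, not_forall] at hS
  obtain ⟨e, x, y, he, hx, hy, hxy⟩ := hS
  obtain ⟨a, b, haba, hbab, hJ⟩ := exists_brandt_pair_of_not_dEquiv_mul (M := WithOne S) (e := e)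
    (by rw [IsIdempotentElem, ← WithOne.coe_mul, he]) (greenD_iff.1 hx) (greenD_iff.1 hy)
    (by rwa [← WithOne.coe_mul, ← greenD_iff])
  have ha : a ≠ 1 := by
    rintro rfl
    exact hJ ⟨1, 1, by simpa using hbab.symm⟩
  have hb : b ≠ 1 := by
    rintro rfl
    exact hJ ⟨a, 1, by simp⟩
  obtain ⟨a, rfl⟩ := WithOne.ne_one_iff_exists.1 ha
  obtain ⟨b, rfl⟩ := WithOne.ne_one_iff_exists.1 hb
  simp only [← WithOne.coe_mul, WithOne.coe_inj] at haba hbab hJ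
  refine (isMatrixUnitsModulo_brandtUnits_prod (a := a) (b := b)
    (I := {c | JLe (c : WithOne S) ↑(b * b)}) ?_ ?_ haba hbab (JLe.refl _) hJ).isDivisor_B2
  · intro c d (hd : JLe _ _)
    simpa only [Set.mem_ofPred_eq, WithOne.coe_mul] using hd.mul_left c
  · intro c d (hc : JLe _ _)
    simpa only [Set.mem_ofPred_eq, WithOne.coe_mul] using hc.mul_right d

section DSIdentity

variable {S T : Type*} [Semigroup S] [Semigroup T]

theorem IsIdempotentPow.map {e x : S} (h : IsIdempotentPow e x) (φ : S →ₙ* T) :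
    IsIdempotentPow (φ e) (φ x) :=
  ⟨map_mem_closure_singleton φ h.1, h.2.map φ⟩

theorem exists_coe_pow_eq_of_mem_closure {x z : S} (hz : z ∈ closure {x}) :
    ∃ n, (x : WithOne S) ^ (n + 1) = z := by
  have hz' := map_mem_closure_singleton WithOne.coeMulHom hz
  rw [WithOne.coeMulHom_apply, WithOne.coeMulHom_apply] at hz'
  exact exists_pow_succ_eq_of_mem_closure hz'

theorem IsIdempotentPow.unique {e f x : S} (he : IsIdempotentPow e x) (hf : IsIdempotentPow f x) :
    e = f := by
  obtain ⟨n, hn⟩ := exists_coe_pow_eq_of_mem_closure he.1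
  obtain ⟨m, hm⟩ := exists_coe_pow_eq_of_mem_closure hf.1
  have he' : IsIdempotentElem ((x : WithOne S) ^ (n + 1)) := hn ▸ he.2.map WithOne.coeMulHom
  have hf' : IsIdempotentElem ((x : WithOne S) ^ (m + 1)) := hm ▸ hf.2.map WithOne.coeMulHom
  exact WithOne.coe_injective (hn ▸ hm ▸ he'.pow_succ_eq_pow_succ hf')

/-- The identity `((xy)^ω (yx)^ω (xy)^ω)^ω = (xy)^ω`, which defines `DS`. -/
def SatisfiesDSIdentity (S : Type*) [Semigroup S] : Prop :=
  ∀ x y e f g : S, IsIdempotentPow e (x * y) → IsIdempotentPow f (y * x) →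
    IsIdempotentPow g (e * f * e) → g = e

theorem SatisfiesDSIdentity.of_injective (hT : SatisfiesDSIdentity T) (φ : S →ₙ* T)
    (hφ : Function.Injective φ) : SatisfiesDSIdentity S := by
  intro x y e f g he hf hg
  apply hφ
  apply hT (φ x) (φ y)
  · simpa only [map_mul] using he.map φ
  · simpa only [map_mul] using hf.map φ
  · simpa only [map_mul] using hg.map φ

theorem SatisfiesDSIdentity.prod (hS : SatisfiesDSIdentity S) (hT : SatisfiesDSIdentity T) :
    SatisfiesDSIdentity (S × T) := by
  intro x y e f g he hf hg
  refine Prod.ext (hS x.1 y.1 e.1 f.1 g.1 ?_ ?_ ?_) (hT x.2 y.2 e.2 f.2 g.2 ?_ ?_ ?_)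
  · exact he.map (MulHom.fst S T)
  · exact hf.map (MulHom.fst S T)
  · exact hg.map (MulHom.fst S T)
  · exact he.map (MulHom.snd S T)
  · exact hf.map (MulHom.snd S T)
  · exact hg.map (MulHom.snd S T)

theorem SatisfiesDSIdentity.of_surjective [Finite S] (hS : SatisfiesDSIdentity S) (φ : S →ₙ* T)
    (hφ : Function.Surjective φ) : SatisfiesDSIdentity T := by
  intro x' y' e' f' g' he' hf' hg'
  obtain ⟨x, rfl⟩ := hφ x'
  obtain ⟨y, rfl⟩ := hφ y'
  obtain ⟨e, he⟩ := exists_isIdempotentPow (x * y)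
  obtain ⟨f, hf⟩ := exists_isIdempotentPow (y * x)
  obtain ⟨g, hg⟩ := exists_isIdempotentPow (e * f * e)
  have hφe : φ e = e' := (he.map φ).unique (by rwa [map_mul])
  have hφf : φ f = f' := (hf.map φ).unique (by rwa [map_mul])
  have hφg : φ g = g' := (hg.map φ).unique (by rwa [map_mul, map_mul, hφe, hφf])
  rw [← hφg, ← hφe, hS x y e f g he hf hg]

end DSIdentity

theorem MemDS.greenD_of_mem_closure {S : Type*} [Semigroup S] [Finite S] (hDS : MemDS S)
    {e c z : S} (he : e * e = e) (hc : GreenD c e) (hz : z ∈ closure {c}) : GreenD z e := by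
  induction hz using closure_induction with
  | mem z hz => rwa [Set.mem_singleton_iff.1 hz]
  | mul a b _ _ ha hb => exact hDS e a b he ha hb

theorem MemDS.satisfiesDSIdentity {S : Type*} [Semigroup S] [Finite S] (hDS : MemDS S) :
    SatisfiesDSIdentity S := by
  intro x y e f g he hf hg
  obtain ⟨n, hn⟩ := exists_coe_pow_eq_of_mem_closure he.1
  obtain ⟨m, hm⟩ := exists_coe_pow_eq_of_mem_closure hf.1
  rw [WithOne.coe_mul] at hn hm
  have he' : IsIdempotentElem (((x : WithOne S) * y) ^ (n + 1)) := hn ▸ he.2.map WithOne.coeMulHom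
  have hf' : IsIdempotentElem (((y : WithOne S) * x) ^ (m + 1)) := hm ▸ hf.2.map WithOne.coeMulHom
  have hJ : JEquiv (((x : WithOne S) * y) ^ (n + 1)) (((y : WithOne S) * x) ^ (m + 1)) :=
    ⟨jLe_pow_succ_of_isIdempotentElem he' m, jLe_pow_succ_of_isIdempotentElem hf' n⟩
  rw [hn, hm] at hJ
  have hfe : GreenD f e := greenD_iff.2 hJ.symm.dEquiv
  have hee : GreenD e e := ⟨e, rfl, rfl⟩
  have hefe : GreenD (e * f * e) e := hDS e _ e he.2 (hDS e e f he.2 hee hfe) hee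
  have hge : GreenD g e := hDS.greenD_of_mem_closure he.2 hefe hg.1
  have hefe_mem : e * f * e ∈ localSub e := ⟨f, rfl⟩
  obtain ⟨s, rfl⟩ : g ∈ localSub e := closure_le.2 (Set.singleton_subset_iff.2 hefe_mem) hg.1
  refine WithOne.coe_injective <|
    eq_of_jLe_of_mul_eq (hg.2.map WithOne.coeMulHom) ?_ ?_ (greenD_iff.1 hge).jEquiv.2
  · rw [← WithOne.coe_mul, mul_assoc, he.2.eq]
  · rw [← WithOne.coe_mul, ← mul_assoc, ← mul_assoc, he.2.eq]

theorem not_satisfiesDSIdentity_B2 : ¬ SatisfiesDSIdentity B2 := by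
  let E (i j : Fin 2) : B2 := ⟨Matrix.single i j 1, Or.inl ⟨i, j, rfl⟩⟩
  have h00 : E 0 1 * E 1 0 = E 0 0 := by decide
  have h11 : E 1 0 * E 0 1 = E 1 1 := by decide
  intro h
  have := h (E 0 1) (E 1 0) (E 0 0) (E 1 1) (E 0 0 * E 1 1 * E 0 0)
    ⟨h00 ▸ subset_closure rfl, show _ * _ = _ by decide⟩
    ⟨h11 ▸ subset_closure rfl, show _ * _ = _ by decide⟩
    ⟨subset_closure rfl, show _ * _ = _ by decide⟩
  exact absurd this (by decide)

/-- **A finite semigroup `S` does not belong to the pseudovariety `DS` if and only if the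
direct product `S × S` has the Brandt semigroup `B₂` as a divisor.** -/
theorem not_memDS_iff_B2_divisor (S : Type) [Semigroup S] [Finite S] :
    ¬ MemDS S ↔ IsDivisor B2 (S × S) := by
  refine ⟨isDivisor_B2_prod_of_not_memDS, fun ⟨U, φ, hφ⟩ hDS => not_satisfiesDSIdentity_B2 ?_⟩
  have hS := hDS.satisfiesDSIdentity
  exact ((hS.prod hS).of_injective (MulMemClass.subtype U) Subtype.val_injective).of_surjective φ hφ
end

section
/- Let S be a finite semigroup in DS and let m be a positive integer such that g^m is the identity element of G for every subgroup G of S (for instance, the least common multiple of the exponents of the subgroups of S). If a word u admits a decomposition u = u_0 u_1 ⋯ u_k with k > |S| and alf(u_0) = alf(u_1) = ⋯ = alf(u_k), then S satisfies the identity u ≈ u^{m+1}. -/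
/-! ### Powers in semigroups and subgroups of semigroups -/

/-- `spow x n` is the `n`-th power `x^n` of an element of a semigroup, for `n ≥ 1`
(with the convention `spow x 0 = x`). -/
def spow {S : Type*} [Semigroup S] (x : S) : ℕ → S
  | 0 => x
  | 1 => x
  | n + 2 => spow x (n + 1) * x

/-- `G` is a subgroup of the semigroup `S` with identity element `e`: a subsemigroup that is
a group under the induced multiplication, with identity `e`. -/
def IsSubgroupWithIdentity {S : Type*} [Semigroup S] (G : Subsemigroup S) (e : S) : Prop :=
  e ∈ G ∧ (∀ g ∈ G, e * g = g ∧ g * e = g) ∧ ∀ g ∈ G, ∃ h ∈ G, g * h = e ∧ h * g = e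

theorem exists_lt_le_map_eq_of_card_le {α : Type*} [Finite α] (f : ℕ → α) {n : ℕ}
    (hn : Nat.card α ≤ n) : ∃ i j, i < j ∧ j ≤ n ∧ f i = f j := by
  have := Fintype.ofFinite α
  obtain ⟨i, hi, j, hj, hne, hf⟩ := Finset.exists_ne_map_eq_of_card_lt_of_maps_to
    (s := Finset.range (n + 1)) (t := Finset.univ)
    (by rw [Finset.card_univ, ← Nat.card_eq_fintype_card, Finset.card_range]; omega)
    (f := f) fun _ _ => Finset.mem_coe.2 (Finset.mem_univ _)
  rw [Finset.mem_range] at hi hj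
  rcases hne.lt_or_gt with h | h
  · exact ⟨i, j, h, by omega, hf⟩
  · exact ⟨j, i, h, by omega, hf.symm⟩

section FiniteMonoid

variable {M : Type*} [Monoid M]

theorem mul_pow_eq_self {a t : M} (h : a * t = a) (n : ℕ) : a * t ^ n = a := by
  induction n with
  | zero => rw [pow_zero, mul_one]
  | succ n ih => rw [pow_succ, ← mul_assoc, ih, h]

theorem pow_add_mul_eq_of_pow_add_eq {x : M} {i p : ℕ} (h : x ^ (i + p) = x ^ i) (q : ℕ) :
    x ^ (i + p * q) = x ^ i := by
  induction q with
  | zero => rw [mul_zero, add_zero]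
  | succ q ih => rw [mul_add_one, ← add_assoc, pow_add, ih, ← pow_add, h]

theorem exists_isIdempotentElem_pow [Finite M] (x : M) :
    ∃ n ≠ 0, IsIdempotentElem (x ^ n) := by
  obtain ⟨i, j, hij, hx⟩ := Set.finite_univ.exists_lt_map_eq_of_forall_mem
    (f := fun n : ℕ => x ^ n) fun _ => Set.mem_univ _
  obtain ⟨p, rfl⟩ := Nat.exists_eq_add_of_lt hij
  have hperiod := pow_add_mul_eq_of_pow_add_eq (x := x) (i := i) (p := p + 1)
    (by rw [← add_assoc]; exact hx.symm)
  have hin : i < (p + 1) * (i + 1) := by nlinarith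
  refine ⟨(p + 1) * (i + 1), by omega, ?_⟩
  calc x ^ ((p + 1) * (i + 1)) * x ^ ((p + 1) * (i + 1))
      = x ^ ((p + 1) * (i + 1) - i) * x ^ (i + (p + 1) * (i + 1)) := by
        rw [← pow_add, ← pow_add]; congr 1; omega
  _ = x ^ ((p + 1) * (i + 1)) := by rw [hperiod, ← pow_add, Nat.sub_add_cancel hin.le]

theorem pow_mul_mul_pow_eq_self {u y w : M} (h : u * y * w = y) (q : ℕ) :
    u ^ q * y * w ^ q = y := by
  induction q with
  | zero => rw [pow_zero, pow_zero, one_mul, mul_one]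
  | succ q ih =>
    calc u ^ (q + 1) * y * w ^ (q + 1) = u ^ q * (u * y * w) * w ^ q := by
          rw [pow_succ, pow_succ']; simp only [mul_assoc]
    _ = y := by rw [h, ih]

/-- Stability of finite monoids: `y J y s` implies `y R y s`. -/
theorem exists_mul_mul_eq_of_mul_mul_mul_eq [Finite M] {u y s v : M}
    (h : u * (y * s) * v = y) : ∃ t, y * s * t = y := by
  obtain ⟨N, hN, hidem⟩ := exists_isIdempotentElem_pow (s * v)
  obtain ⟨N, rfl⟩ := Nat.exists_eq_add_one_of_ne_zero hN
  have hcycle := pow_mul_mul_pow_eq_self (u := u) (y := y) (w := s * v)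
    (by simpa only [mul_assoc] using h) (N + 1)
  refine ⟨v * (s * v) ^ N, ?_⟩
  calc y * s * (v * (s * v) ^ N) = y * (s * v) ^ (N + 1) := by
        rw [pow_succ']; simp only [mul_assoc]
  _ = y := by nth_rewrite 1 [← hcycle]; rw [mul_assoc, hidem.eq, hcycle]

theorem exists_pow_succ_eq_self_of_mul_mul_eq [Finite M] {x c : M} (h : x * x * c = x) :
    ∃ n ≠ 0, IsIdempotentElem (x ^ n) ∧ x ^ (n + 1) = x := by
  obtain ⟨n, hn, hidem⟩ := exists_isIdempotentElem_pow x
  have hcycle := pow_mul_mul_pow_eq_self (u := x) (y := x) (w := c) h n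
  refine ⟨n, hn, hidem, ?_⟩
  calc x ^ (n + 1) = x ^ n * (x ^ n * x * c ^ n) := by rw [hcycle, pow_succ]
  _ = x := by rw [← mul_assoc, ← mul_assoc, hidem.eq, hcycle]

end FiniteMonoid

section Factors

variable {M : Type*} [Monoid M]

/-- `a` is a factor of `b`, i.e. `b ≤_J a`. -/
def IsFactor (a b : M) : Prop := ∃ u v, u * a * v = b

namespace IsFactor

theorem refl (a : M) : IsFactor a a := ⟨1, 1, by rw [one_mul, mul_one]⟩

theorem trans {a b c : M} (hab : IsFactor a b) (hbc : IsFactor b c) : IsFactor a c := by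
  obtain ⟨u, v, rfl⟩ := hab
  obtain ⟨u', v', rfl⟩ := hbc
  exact ⟨u' * u, v * v', by simp only [mul_assoc]⟩

theorem mul_left {a b : M} (h : IsFactor a b) (c : M) : IsFactor a (c * b) := by
  obtain ⟨u, v, rfl⟩ := h
  exact ⟨c * u, v, by simp only [mul_assoc]⟩

theorem mul_right {a b : M} (h : IsFactor a b) (c : M) : IsFactor a (b * c) := by
  obtain ⟨u, v, rfl⟩ := h
  exact ⟨u, v * c, by simp only [mul_assoc]⟩

theorem pow {a b : M} (h : IsFactor a b) {n : ℕ} (hn : n ≠ 0) : IsFactor a (b ^ n) := by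
  obtain ⟨n, rfl⟩ := Nat.exists_eq_add_one_of_ne_zero hn
  rw [pow_succ]
  exact h.mul_left _

end IsFactor

theorem List.isFactor_prod {a : M} {L : List M} (h : a ∈ L) : IsFactor a L.prod := by
  obtain ⟨s, t, rfl⟩ := List.append_of_mem h
  exact ⟨s.prod, t.prod, by rw [List.prod_append, List.prod_cons, mul_assoc]⟩

/-- For idempotent `e`, `e ≤_J g` implies `e R e g`; finite monoids in `DS` have this property. -/
def FactorsRStable (M : Type*) [Monoid M] : Prop :=
  ∀ e g : M, IsIdempotentElem e → IsFactor g e → ∃ τ, e * g * τ = e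

namespace FactorsRStable

variable [Finite M] (hM : FactorsRStable M)
include hM

theorem exists_mul_prod_mul_eq_of_idempotent (L : List M) {a e : M} (he : IsIdempotentElem e)
    (hae : a * e = a) (hL : ∀ g ∈ L, IsFactor g e) : ∃ z, a * L.prod * z = a := by
  induction L generalizing a e with
  | nil => exact ⟨1, by rw [List.prod_nil, mul_one, mul_one]⟩
  | cons g L ih =>
    obtain ⟨τ, hτ⟩ := hM e g he (hL g List.mem_cons_self)
    -- using `τ e` instead of `τ` puts the next idempotent `(τ e g)^N` `J`-below `e`
    have hagτ : a * g * (τ * e) = a := by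
      calc a * g * (τ * e) = a * (e * g * τ) * e := by
            conv_lhs => rw [← hae]
            simp only [mul_assoc]
      _ = a := by rw [hτ, hae, hae]
    obtain ⟨N, hN, hidem⟩ := exists_isIdempotentElem_pow (τ * e * g)
    have hfix : a * g * (τ * e * g) ^ N = a * g :=
      mul_pow_eq_self (by rw [← mul_assoc, hagτ]) N
    have he_factor : IsFactor e ((τ * e * g) ^ N) :=
      (((IsFactor.refl e).mul_left τ).mul_right g).pow hN
    obtain ⟨z, hz⟩ :=
      ih hidem hfix fun h hh => (hL h (List.mem_cons_of_mem g hh)).trans he_factor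
    refine ⟨z * (τ * e), ?_⟩
    calc a * (g :: L).prod * (z * (τ * e)) = a * g * L.prod * z * (τ * e) := by
          rw [List.prod_cons]; simp only [mul_assoc]
    _ = a := by rw [hz, hagτ]

theorem exists_mul_prod_mul_eq (L : List M) {a t : M} (hat : a * t = a)
    (hL : ∀ g ∈ L, IsFactor g t) : ∃ z, a * L.prod * z = a := by
  obtain ⟨N, hN, hidem⟩ := exists_isIdempotentElem_pow t
  exact hM.exists_mul_prod_mul_eq_of_idempotent L hidem (mul_pow_eq_self hat N)
    fun g hg => (hL g hg).pow hN

theorem exists_mul_mul_eq_of_blocks (ws : ℕ → List M) {n : ℕ} (hn : Nat.card M ≤ n)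
    (hws : ∀ i < n, ∀ g, g ∈ ws i ↔ g ∈ ws 0) :
    ∃ c, ((List.range n).flatMap ws).prod * ((List.range n).flatMap ws).prod * c =
      ((List.range n).flatMap ws).prod := by
  obtain ⟨i, j, hij, hjn, hprefix⟩ :=
    exists_lt_le_map_eq_of_card_le (fun l => ((List.range l).flatMap ws).prod) hn
  obtain ⟨d, rfl⟩ := Nat.exists_eq_add_of_lt hij
  obtain ⟨r, rfl⟩ := Nat.exists_eq_add_of_le (hij.le.trans hjn)
  set W := (List.range (i + r)).flatMap ws
  set pre := (List.range i).flatMap ws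
  set mid := ((List.range (d + 1)).map (i + ·)).flatMap ws
  set suf := ((List.range r).map (i + ·)).flatMap ws
  have hWprod : W.prod = pre.prod * suf.prod := by
    rw [← List.prod_append, List.flatMap_append.symm.trans (congrArg _ List.range_add.symm)]
  have hcycle : pre.prod * mid.prod = pre.prod := by
    rw [← List.prod_append, ← List.flatMap_append, ← List.range_add, hprefix, add_assoc]
  have hblock : ∀ g ∈ suf ++ W, ∃ l < i + r, g ∈ ws l := by
    intro g hg
    simp only [suf, W, List.mem_append, List.mem_flatMap, List.mem_map, List.mem_range] at hg
    rcases hg with ⟨_, ⟨t, ht, rfl⟩, hgt⟩ | ⟨l, hl, hgl⟩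
    · exact ⟨i + t, by omega, hgt⟩
    · exact ⟨l, hl, hgl⟩
  have hfactor : ∀ g ∈ suf ++ W, IsFactor g mid.prod := by
    intro g hg
    obtain ⟨l, hl, hgl⟩ := hblock g hg
    refine List.isFactor_prod (List.mem_flatMap.2 ⟨i, ?_, ?_⟩)
    · exact List.mem_map.2 ⟨0, List.mem_range.2 d.succ_pos, add_zero i⟩
    · exact (hws i (by omega) g).2 ((hws l hl g).1 hgl)
  obtain ⟨z, hz⟩ := hM.exists_mul_prod_mul_eq (suf ++ W) hcycle hfactor
  refine ⟨z * suf.prod, ?_⟩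
  calc W.prod * W.prod * (z * suf.prod) = pre.prod * (suf ++ W).prod * z * suf.prod := by
        rw [List.prod_append]; nth_rewrite 1 [hWprod]; simp only [mul_assoc]
  _ = W.prod := by rw [hz, hWprod]

end FactorsRStable

end Factors

section Semigroup

variable {S : Type*} [Semigroup S]

instance [Finite S] : Finite (WithOne S) := inferInstanceAs (Finite (Option S))

theorem WithOne.exists_coe_eq_coe_mul (a : S) (u : WithOne S) :
    ∃ b : S, (b : WithOne S) = a * u := by
  rcases eq_or_ne u 1 with rfl | hu
  · exact ⟨a, (mul_one _).symm⟩
  · obtain ⟨b, rfl⟩ := WithOne.ne_one_iff_exists.1 hu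
    exact ⟨_, WithOne.coe_mul _ _⟩

theorem WithOne.exists_coe_eq_mul_coe (a : S) (u : WithOne S) :
    ∃ b : S, (b : WithOne S) = u * a := by
  rcases eq_or_ne u 1 with rfl | hu
  · exact ⟨a, (one_mul _).symm⟩
  · obtain ⟨b, rfl⟩ := WithOne.ne_one_iff_exists.1 hu
    exact ⟨_, WithOne.coe_mul _ _⟩

theorem mem_rIdeal_iff_coe {x y : S} :
    x ∈ rIdeal y ↔ ∃ u : WithOne S, (x : WithOne S) = y * u := by
  rw [rIdeal, Set.mem_insert_iff, Set.mem_ofPred_eq]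
  constructor
  · rintro (rfl | ⟨u, rfl⟩)
    · exact ⟨1, (mul_one _).symm⟩
    · exact ⟨u, WithOne.coe_mul _ _⟩
  · rintro ⟨u, hu⟩
    rcases eq_or_ne u 1 with rfl | hu1
    · exact Or.inl (WithOne.coe_injective (hu.trans (mul_one _)))
    · obtain ⟨b, rfl⟩ := WithOne.ne_one_iff_exists.1 hu1
      exact Or.inr ⟨b, WithOne.coe_injective (by rw [WithOne.coe_mul, hu])⟩

theorem mem_lIdeal_iff_coe {x y : S} :
    x ∈ lIdeal y ↔ ∃ u : WithOne S, (x : WithOne S) = u * y := by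
  rw [lIdeal, Set.mem_insert_iff, Set.mem_ofPred_eq]
  constructor
  · rintro (rfl | ⟨u, rfl⟩)
    · exact ⟨1, (one_mul _).symm⟩
    · exact ⟨u, WithOne.coe_mul _ _⟩
  · rintro ⟨u, hu⟩
    rcases eq_or_ne u 1 with rfl | hu1
    · exact Or.inl (WithOne.coe_injective (hu.trans (one_mul _)))
    · obtain ⟨b, rfl⟩ := WithOne.ne_one_iff_exists.1 hu1
      exact Or.inr ⟨b, WithOne.coe_injective (by rw [WithOne.coe_mul, hu])⟩

theorem greenR_of_mem {x y : S} (hxy : x ∈ rIdeal y) (hyx : y ∈ rIdeal x) : GreenR x y := by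
  have key : ∀ {a b : S}, a ∈ rIdeal b → rIdeal a ⊆ rIdeal b := by
    intro a b hab z hz
    obtain ⟨u, hu⟩ := mem_rIdeal_iff_coe.1 hab
    obtain ⟨v, hv⟩ := mem_rIdeal_iff_coe.1 hz
    exact mem_rIdeal_iff_coe.2 ⟨u * v, by rw [hv, hu, mul_assoc]⟩
  exact (key hxy).antisymm (key hyx)

theorem greenL_of_mem {x y : S} (hxy : x ∈ lIdeal y) (hyx : y ∈ lIdeal x) : GreenL x y := by
  have key : ∀ {a b : S}, a ∈ lIdeal b → lIdeal a ⊆ lIdeal b := by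
    intro a b hab z hz
    obtain ⟨u, hu⟩ := mem_lIdeal_iff_coe.1 hab
    obtain ⟨v, hv⟩ := mem_lIdeal_iff_coe.1 hz
    exact mem_lIdeal_iff_coe.2 ⟨v * u, by rw [hv, hu, mul_assoc]⟩
  exact (key hxy).antisymm (key hyx)

theorem GreenD.isFactor_coe {x y : S} (h : GreenD x y) : IsFactor (x : WithOne S) y := by
  obtain ⟨z, hxz, hzy⟩ := h
  obtain ⟨u, hu⟩ := mem_rIdeal_iff_coe.1 (hxz ▸ Set.mem_insert z _ : z ∈ rIdeal x)
  obtain ⟨v, hv⟩ := mem_lIdeal_iff_coe.1 (hzy ▸ Set.mem_insert y _ : y ∈ lIdeal z)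
  exact ⟨v, u, by rw [hv, hu, mul_assoc]⟩

theorem MemDS.exists_coe_mul_mul_eq [Finite S] (hDS : MemDS S) {e U g V : S} (he : e * e = e)
    (hUgV : U * g * V = e) (heU : e * U = U) :
    ∃ τ : WithOne S, (e : WithOne S) * g * τ = e := by
  set f := g * V * U with hf_def
  have hUf : U * f = U := by rw [hf_def, ← mul_assoc, ← mul_assoc, hUgV, heU]
  have hf : f * f = f := by
    calc f * f = g * V * (U * f) := by simp only [hf_def, mul_assoc]
    _ = f := by rw [hUf]
  -- `e R U L f`, so the `D`-class of `f` contains `e f`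
  have hef : GreenD e f := by
    refine ⟨U, greenR_of_mem ?_ ?_, greenL_of_mem ?_ ?_⟩
    · exact mem_rIdeal_iff_coe.2 ⟨↑(g * V), by rw [← WithOne.coe_mul, ← mul_assoc, hUgV]⟩
    · exact mem_rIdeal_iff_coe.2 ⟨U, by rw [← WithOne.coe_mul, heU]⟩
    · exact mem_lIdeal_iff_coe.2 ⟨U, by rw [← WithOne.coe_mul, hUf]⟩
    · exact mem_lIdeal_iff_coe.2 ⟨↑(g * V), by rw [← WithOne.coe_mul]⟩
  have hfe : IsFactor (f : WithOne S) e := by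
    refine ⟨U, ↑(g * V), ?_⟩
    rw [← WithOne.coe_mul, ← WithOne.coe_mul, ← he]
    nth_rewrite 1 [← hUgV, ← hUgV]
    simp only [hf_def, mul_assoc]
  obtain ⟨u, v, huv⟩ := (hDS f e f hf hef ⟨f, rfl, rfl⟩).isFactor_coe.trans hfe
  rw [WithOne.coe_mul] at huv
  obtain ⟨t, ht⟩ := exists_mul_mul_eq_of_mul_mul_mul_eq huv
  refine ⟨↑(V * U) * t, ?_⟩
  calc (e : WithOne S) * g * (↑(V * U) * t) = e * f * t := by
        rw [hf_def]; push_cast; simp only [mul_assoc]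
  _ = e := ht

theorem MemDS.factorsRStable_withOne [Finite S] (hDS : MemDS S) :
    FactorsRStable (WithOne S) := by
  rintro e g he ⟨u, v, huv⟩
  rcases eq_or_ne g 1 with rfl | hg
  · exact ⟨1, by rw [mul_one, mul_one]⟩
  obtain ⟨g, rfl⟩ := WithOne.ne_one_iff_exists.1 hg
  obtain ⟨ug, hug⟩ := WithOne.exists_coe_eq_mul_coe g u
  obtain ⟨ugv, hugv⟩ := WithOne.exists_coe_eq_coe_mul ug v
  obtain ⟨e, rfl⟩ := WithOne.ne_one_iff_exists.1
    (show e ≠ 1 by rw [← huv, ← hug, ← hugv]; exact WithOne.coe_ne_one)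
  obtain ⟨U, hU⟩ := WithOne.exists_coe_eq_coe_mul e u
  obtain ⟨V, hV⟩ := WithOne.exists_coe_eq_mul_coe e v
  have he' : (e : WithOne S) * e = e := he
  refine hDS.exists_coe_mul_mul_eq (U := U) (V := V) (WithOne.coe_injective he')
    (WithOne.coe_injective ?_) (WithOne.coe_injective ?_)
  · push_cast
    calc (U : WithOne S) * g * V = e * (u * g * v) * e := by rw [hU, hV]; simp only [mul_assoc]
    _ = e := by rw [huv, he', he']
  · push_cast
    rw [hU, ← mul_assoc, he']

theorem coe_spow (x : S) :
    ∀ {n : ℕ}, n ≠ 0 → ((spow x n : S) : WithOne S) = (x : WithOne S) ^ n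
  | 1, _ => (pow_one _).symm
  | n + 2, _ => by rw [spow, WithOne.coe_mul, coe_spow x n.succ_ne_zero, ← pow_succ]

def cyclicSubsemigroup (x : S) : Subsemigroup S :=
  (Submonoid.powers (x : WithOne S)).toSubsemigroup.comap WithOne.coeMulHom

theorem mem_cyclicSubsemigroup_iff {x y : S} :
    y ∈ cyclicSubsemigroup x ↔ ∃ k, (x : WithOne S) ^ k = y :=
  Submonoid.mem_powers_iff _ _

theorem isSubgroupWithIdentity_cyclicSubsemigroup {x : S} {n : ℕ} (hn : n ≠ 0)
    (hidem : IsIdempotentElem ((x : WithOne S) ^ n)) (hcycle : (x : WithOne S) ^ (n + 1) = x) :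
    IsSubgroupWithIdentity (cyclicSubsemigroup x) (spow x n) := by
  have hneutral : ∀ k ≠ 0, (x : WithOne S) ^ n * x ^ k = x ^ k := by
    intro k hk
    obtain ⟨k, rfl⟩ := Nat.exists_eq_add_one_of_ne_zero hk
    rw [pow_succ', ← mul_assoc, ← pow_succ, hcycle]
  have hk_ne_zero : ∀ {g : S} {k : ℕ}, (x : WithOne S) ^ k = g → k ≠ 0 := by
    rintro g _ hk rfl
    exact WithOne.coe_ne_one (hk.symm.trans (pow_zero _))
  refine ⟨mem_cyclicSubsemigroup_iff.2 ⟨n, (coe_spow x hn).symm⟩, ?_, ?_⟩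
  · intro g hg
    obtain ⟨k, hk⟩ := mem_cyclicSubsemigroup_iff.1 hg
    constructor <;> apply WithOne.coe_injective <;>
      rw [WithOne.coe_mul, coe_spow x hn, ← hk]
    · exact hneutral k (hk_ne_zero hk)
    · rw [← pow_mul_comm]; exact hneutral k (hk_ne_zero hk)
  · intro g hg
    obtain ⟨k, hk⟩ := mem_cyclicSubsemigroup_iff.1 hg
    obtain ⟨n, rfl⟩ := Nat.exists_eq_add_one_of_ne_zero hn
    have hinv : (x : WithOne S) ^ k * x ^ (n * k + n + 1) = x ^ (n + 1) := by
      rw [← pow_add, show k + (n * k + n + 1) = (n + 1) * (k + 1) by ring, pow_mul,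
        hidem.pow_succ_eq]
    refine ⟨spow x (n * k + n + 1), mem_cyclicSubsemigroup_iff.2
      ⟨_, (coe_spow x (Nat.succ_ne_zero _)).symm⟩, ?_, ?_⟩ <;>
      apply WithOne.coe_injective <;>
      rw [WithOne.coe_mul, coe_spow x hn, coe_spow x (Nat.succ_ne_zero _), ← hk]
    · exact hinv
    · rw [← pow_mul_comm]; exact hinv

theorem coe_pow_succ_eq_self_of_subgroup_exponent [Finite S] {m : ℕ}
    (hexp : ∀ (G : Subsemigroup S) (e : S), IsSubgroupWithIdentity G e →
      ∀ g ∈ G, spow g m = e)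
    {x : S} {c : WithOne S} (h : (x : WithOne S) * x * c = x) :
    (x : WithOne S) ^ (m + 1) = x := by
  rcases eq_or_ne m 0 with rfl | hm
  · exact pow_one _
  obtain ⟨n, hn, hidem, hcycle⟩ := exists_pow_succ_eq_self_of_mul_mul_eq h
  have hxm := hexp _ _ (isSubgroupWithIdentity_cyclicSubsemigroup hn hidem hcycle) x
    (mem_cyclicSubsemigroup_iff.2 ⟨1, pow_one _⟩)
  rw [pow_succ, ← coe_spow x hm, hxm, coe_spow x hn, ← pow_succ, hcycle]

theorem coe_lift_wOfList (f : ℕ → S) : ∀ {L : List ℕ}, L ≠ [] →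
    (FreeSemigroup.lift f (wOfList L) : WithOne S) = (L.map fun a => (f a : WithOne S)).prod
  | [a], _ => by rw [List.map_singleton, List.prod_singleton]; rfl
  | a :: b :: l, _ => by
    rw [List.map_cons, List.prod_cons,
      show wOfList (a :: b :: l) = FreeSemigroup.of a * wOfList (b :: l) from rfl,
      FreeSemigroup.lift_of_mul, WithOne.coe_mul, coe_lift_wOfList f (List.cons_ne_nil b l)]

end Semigroup

theorem ds_pow_identity_general (S : Type) [Semigroup S] [Finite S] (hDS : MemDS S)
    (m : ℕ)
    (hexp : ∀ (G : Subsemigroup S) (e : S), IsSubgroupWithIdentity G e →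
      ∀ g ∈ G, spow g m = e)
    (k : ℕ) (hk : Nat.card S < k) (us : ℕ → List ℕ)
    (half : ∀ i ≤ k, (us i).toFinset = (us 0).toFinset) :
    Satisfies S (wOfList ((List.range (k + 1)).flatMap us))
      (wOfList (powerList (m + 1) ((List.range (k + 1)).flatMap us))) := by
  intro f
  set W := (List.range (k + 1)).flatMap us
  rcases eq_or_ne W [] with hW | hW
  · simp [hW, powerList]
  have hWpow : powerList (m + 1) W ≠ [] := by simp [powerList, hW]
  have hcontent : ∀ i < k + 1, ∀ g, g ∈ (us i).map (fun a => (f a : WithOne S)) ↔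
      g ∈ (us 0).map (fun a => (f a : WithOne S)) := by
    intro i hi g
    simp only [List.mem_map, ← List.mem_toFinset, half i (by omega)]
  have hcard : Nat.card (WithOne S) ≤ k + 1 := by
    rw [show Nat.card (WithOne S) = Nat.card S + 1 from Finite.card_option]; omega
  obtain ⟨c, hc⟩ := hDS.factorsRStable_withOne.exists_mul_mul_eq_of_blocks _ hcard hcontent
  rw [← List.map_flatMap, ← coe_lift_wOfList f hW] at hc
  apply WithOne.coe_injective
  rw [coe_lift_wOfList f hWpow, powerList, List.map_flatten, List.map_replicate,
    List.prod_flatten, List.map_replicate, List.prod_replicate, ← coe_lift_wOfList f hW]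
  exact (coe_pow_succ_eq_self_of_subgroup_exponent hexp hc).symm

/-- **Lemma on `DS`.** Let `S` be a finite semigroup in `DS` and let `m ≥ 1` be such that
`g^m` is the identity element of `G` for every subgroup `G` of `S`. If a word `u` admits a
decomposition `u = u_0 u_1 ⋯ u_k` with `k > |S|` and `alf(u_0) = alf(u_1) = ⋯ = alf(u_k)`,
then `S` satisfies the identity `u ≈ u^{m+1}`. -/
theorem ds_pow_identity (S : Type) [Semigroup S] [Finite S] (hDS : MemDS S)
    (m : ℕ) (hm : 1 ≤ m)
    (hexp : ∀ (G : Subsemigroup S) (e : S), IsSubgroupWithIdentity G e →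
      ∀ g ∈ G, spow g m = e)
    (k : ℕ) (hk : Nat.card S < k) (us : ℕ → List ℕ)
    (hne : ∀ i ≤ k, us i ≠ [])
    (half : ∀ i ≤ k, (us i).toFinset = (us 0).toFinset) :
    Satisfies S (wOfList ((List.range (k + 1)).flatMap us))
      (wOfList (powerList (m + 1) ((List.range (k + 1)).flatMap us))) :=
  ds_pow_identity_general S hDS m hexp k hk us half
end

section
/- The map sending each α ∈ IC_4 to the 4×4 matrix A over the two-element field with entries A_{ij} = 1 if iα = j and A_{ij} = 0 otherwise is an injective monoid homomorphism from IC_4 into the multiplicative monoid of upper triangular 4×4 matrices over the two-element field; in particular, IC_4 embeds into T_4(2). -/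
/-- The matrix `A` over `𝔽₂ = ZMod 2` associated with `α ∈ IC₄`: `A i j = 1` if `iα = j` and
`A i j = 0` otherwise. -/
def toMat (α : IC4) : Matrix (Fin 4) (Fin 4) (ZMod 2) :=
  Matrix.of fun i j => if α.toFun i = some j then 1 else 0

/-!
A partial map `f : m → Option n` is recorded by the `0/1` matrix with a `1` at `(i, j)` exactly
when `f i = some j`. Each row has at most one nonzero entry, so the `(i, j)` entry of a product
of two such matrices is `1` exactly when `i ↦ k ↦ j` for the unique `k` with `f i = some k`;
so composition of partial maps becomes matrix multiplication over any semiring. The matrix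
determines the map as soon as `0 ≠ 1`, and extensive maps (`i ≤ f i`) give upper triangular
matrices.
-/

namespace Matrix

variable {m n p R : Type*}

def ofPartialFun [DecidableEq n] [Zero R] [One R] (f : m → Option n) : Matrix m n R :=
  of fun i j => if f i = some j then 1 else 0

@[simp]
theorem ofPartialFun_apply [DecidableEq n] [Zero R] [One R] (f : m → Option n) (i : m) (j : n) :
    ofPartialFun f i j = (if f i = some j then 1 else 0 : R) :=
  rfl

theorem ofPartialFun_some [DecidableEq n] [Zero R] [One R] :
    ofPartialFun (some : n → Option n) = (1 : Matrix n n R) := by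
  ext i j
  simp [one_apply]

-- Without `(R := R)` on both factors, `*` elaborates to the multiplication of `CStarMatrix`.
theorem ofPartialFun_bind [Fintype n] [DecidableEq n] [DecidableEq p] [NonAssocSemiring R]
    (f : m → Option n) (g : n → Option p) :
    ofPartialFun (fun i => (f i).bind g) = ofPartialFun (R := R) f * ofPartialFun (R := R) g := by
  ext i j
  simp only [ofPartialFun_apply, mul_apply]
  cases f i with
  | none => simp
  | some k =>
    rw [Fintype.sum_eq_single k fun l hl => by simp [Ne.symm hl]]
    simp

theorem ofPartialFun_injective [DecidableEq n] [Zero R] [One R] [NeZero (1 : R)] :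
    Function.Injective (ofPartialFun : (m → Option n) → Matrix m n R) := by
  intro f g hfg
  funext i
  refine Option.ext fun j => ?_
  have hij : (if f i = some j then 1 else 0 : R) = if g i = some j then 1 else 0 :=
    congr_fun (congr_fun hfg i) j
  by_cases hf : f i = some j <;> by_cases hg : g i = some j <;> simp_all

theorem blockTriangular_ofPartialFun [Preorder n] [DecidableEq n] [Zero R] [One R]
    {f : n → Option n} (hf : ∀ i j, f i = some j → i ≤ j) :
    (ofPartialFun f : Matrix n n R).BlockTriangular id :=
  fun i j hji => if_neg fun hij => (hf i j hij).not_gt hji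

end Matrix

namespace ICmon

variable {m : ℕ}

theorem toFun_injective : Function.Injective (toFun : ICmon m → _) :=
  fun _ _ => ext

theorem toFun_mul (α β : ICmon m) : (α * β).toFun = fun i => (α.toFun i).bind β.toFun :=
  rfl

theorem toFun_one : (1 : ICmon m).toFun = some :=
  rfl

end ICmon

theorem toMat_eq_ofPartialFun (α : IC4) : toMat α = Matrix.ofPartialFun α.toFun :=
  rfl

/-- **`IC₄` embeds into `T₄(2)`**: the map `α ↦ toMat α` is an injective monoid homomorphism
from `IC₄` into the multiplicative monoid of upper triangular `4 × 4` matrices over the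
two-element field (its values are upper triangular, it is multiplicative, and it sends the
identity of `IC₄` to the identity matrix). -/
theorem IC4_embeds_T42 :
    Function.Injective toMat ∧
    (∀ α β : IC4, toMat (α * β) = toMat α * toMat β) ∧
    toMat (1 : IC4) = 1 ∧
    ∀ α : IC4, (toMat α).BlockTriangular id := by
  simp only [toMat_eq_ofPartialFun]
  refine ⟨Matrix.ofPartialFun_injective.comp ICmon.toFun_injective, fun α β => ?_, ?_,
    fun α => Matrix.blockTriangular_ofPartialFun α.extv'⟩
  · rw [ICmon.toFun_mul, Matrix.ofPartialFun_bind]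
  · rw [ICmon.toFun_one, Matrix.ofPartialFun_some]
end

section
/- Fix positive integers n, k and m ≥ 1, and let u_n, X_n be as defined. Then with v_n = u_n^{m+1}: (P0) u_n(X_n) ≠ v_n(X_n); (P1) for all variables y, z, the two-letter word yz occurs as a factor of u_n(X_n) at most once; (P2) for every variable z, between any two occurrences of z in u_n(X_n) there occur at least n pairwise distinct variables. -/
/-! ### The words `u_n` of the main construction -/

/-- The variable `x`. -/
def varx : ℕ := 0
/-- The variable `x_i` (the variables `x, x_i, y_i, z_i` are pairwise distinct). -/
def varX (i : ℕ) : ℕ := 3 * i + 1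
/-- The variable `y_i`. -/
def varY (i : ℕ) : ℕ := 3 * i + 2
/-- The variable `z_i`. -/
def varZ (i : ℕ) : ℕ := 3 * i + 3

/-- `a_n[τ] = x^k x_{0τ} x^k y_1 x^k x_{1τ} x^k y_2 x^k x_{2τ} x^k ⋯ x^k y_n x^k x_{nτ} x^k`. -/
def aWord (n k : ℕ) (τ : ℕ → ℕ) : List ℕ :=
  List.replicate k varx ++ [varX (τ 0)] ++
    (List.range n).flatMap (fun i =>
      List.replicate k varx ++ [varY (i + 1)] ++ List.replicate k varx ++ [varX (τ (i + 1))]) ++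
    List.replicate k varx

/-- `b_n[τ] = x^k z_{0τ} x^k y_1 x^k z_{1τ} x^k y_2 x^k z_{2τ} x^k ⋯ x^k y_n x^k z_{nτ} x^k`. -/
def bWord (n k : ℕ) (τ : ℕ → ℕ) : List ℕ :=
  List.replicate k varx ++ [varZ (τ 0)] ++
    (List.range n).flatMap (fun i =>
      List.replicate k varx ++ [varY (i + 1)] ++ List.replicate k varx ++ [varZ (τ (i + 1))]) ++
    List.replicate k varx

/-- `u_n = ∏_{i=0}^{n} a_n[π^i] b_n[π^i]`, where `π` is the cyclic permutation `(0 1 ⋯ n)` of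
`{0, 1, …, n}`, so that `π^i` sends `j` to `(j + i) mod (n + 1)`. -/
def uWord (n k : ℕ) : List ℕ :=
  (List.range (n + 1)).flatMap fun i =>
    aWord n k (fun j => (j + i) % (n + 1)) ++ bWord n k (fun j => (j + i) % (n + 1))

/-- `X_n = {x_0, y_0, z_0, x_1, y_1, z_1, …, x_n, y_n, z_n}`. -/
def Xset (n : ℕ) : Set ℕ := {v | ∃ i ≤ n, v = varX i ∨ v = varY i ∨ v = varZ i}

/-!
After deleting `x`, the word `u_n(X_n)` is a concatenation of `2(n+1)` blocks of length `2n+1`: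
block `2i` reads `x_{σ 0} y_1 x_{σ 1} ⋯ y_n x_{σ n}` with `σ j = (j + i) mod (n+1)`, and block
`2i+1` is the same with `z` in place of `x`. So `y_j` sits at the same odd place of every block,
while the even place `2j` of block `q` carries `x` or `z`, according to the parity of `q`, with
index `(j + ⌊q/2⌋) mod (n+1)`.

(P0) is a count of lengths. (P2) holds because any `2n+1` consecutive letters are pairwise distinct:
equal `y`'s are a whole block apart, and two `x`'s (or two `z`'s) at distance at most `2n` lie in
the same block, where their indices differ. For (P1), the two letters of a factor `ab` determine the
place of `a` in its block (read off the index of whichever is a `y`; if neither is, `a` ends a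
block), and a letter `x_s` or `z_s` at a known place determines its block.
-/

namespace List

theorem flatMap_range_two_mul {α : Type*} (M : ℕ) (f : ℕ → List α) :
    (range M).flatMap (fun i => f (2 * i) ++ f (2 * i + 1)) = (range (2 * M)).flatMap f := by
  induction M with
  | zero => simp
  | succ M ih =>
    rw [show 2 * (M + 1) = 2 * M + 1 + 1 by omega]
    simp only [range_succ, flatMap_append, ih, flatMap_cons, flatMap_nil, append_nil,
      append_assoc]

theorem flatMap_range_map_range {α : Type*} (M c : ℕ) (G : ℕ → ℕ → α) :
    (range M).flatMap (fun q => (range c).map (G q)) =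
      (range (M * c)).map (fun p => G (p / c) (p % c)) := by
  induction M with
  | zero => simp
  | succ M ih =>
    rw [range_succ, flatMap_append, ih, Nat.succ_mul, range_add, map_append, map_map,
      flatMap_singleton]
    congr 1
    refine map_congr_left fun r hr => ?_
    have hr : r < c := mem_range.1 hr
    simp [Nat.add_comm (M * c), Nat.add_mul_div_right _ _ (by omega : 0 < c),
      Nat.div_eq_of_lt hr, Nat.mod_eq_of_lt hr]

theorem cons_flatMap_range_pair {α : Type*} (m : ℕ) (F : ℕ → α) :
    F 0 :: (range m).flatMap (fun i => [F (2 * i + 1), F (2 * i + 2)]) =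
      (range (2 * m + 1)).map F := by
  rw [range_succ_eq_map, map_cons, map_map]
  congr 1
  convert flatMap_range_two_mul m (fun j => [F (j + 1)]) using 1
  exacts [rfl, map_eq_flatMap]

end List

section Restrict

variable (X : Set ℕ)

theorem restrict_append (v w : List ℕ) : restrict (v ++ w) X = restrict v X ++ restrict w X :=
  List.filter_append _ _

theorem restrict_flatMap {α : Type*} (l : List α) (f : α → List ℕ) :
    restrict (l.flatMap f) X = l.flatMap fun a => restrict (f a) X :=
  List.filter_flatMap

theorem restrict_powerList (j : ℕ) (w : List ℕ) :
    restrict (powerList j w) X = powerList j (restrict w X) := by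
  simp [restrict, powerList, List.filter_flatten, List.map_replicate]

end Restrict

theorem powerList_ne_self {w : List ℕ} (hw : w ≠ []) {j : ℕ} (hj : 2 ≤ j) :
    w ≠ powerList j w := by
  intro h
  have hlen := congrArg List.length h
  simp only [powerList, List.length_flatten, List.map_replicate, List.sum_replicate,
    smul_eq_mul] at hlen
  have := List.length_pos_iff.2 hw
  nlinarith

theorem getElem?_map_range_eq_some {L i z : ℕ} {f : ℕ → ℕ} :
    ((List.range L).map f)[i]? = some z ↔ i < L ∧ f i = z := by
  simp [List.getElem?_eq_some_iff]

theorem factorAtMostOnce_pair_map_range {L : ℕ} {f : ℕ → ℕ}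
    (hf : ∀ p p', p + 1 < L → p' + 1 < L → f p = f p' → f (p + 1) = f (p' + 1) → p = p')
    (y z : ℕ) : FactorAtMostOnce [y, z] ((List.range L).map f) := by
  have hpos : ∀ v s, v ++ [y, z] ++ s = (List.range L).map f →
      v.length + 1 < L ∧ f v.length = y ∧ f (v.length + 1) = z := by
    intro v s h
    have hy : ((List.range L).map f)[v.length]? = some y := by simp [← h]
    have hz : ((List.range L).map f)[v.length + 1]? = some z := by simp [← h]
    rw [getElem?_map_range_eq_some] at hy hz
    exact ⟨hz.1, hy.2, hz.2⟩
  intro v₁ s₁ v₂ s₂ h₁ h₂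
  obtain ⟨hL₁, hy₁, hz₁⟩ := hpos _ _ h₁
  obtain ⟨hL₂, hy₂, hz₂⟩ := hpos _ _ h₂
  have hlen : v₁.length = v₂.length :=
    hf _ _ hL₁ hL₂ (hy₁.trans hy₂.symm) (hz₁.trans hz₂.symm)
  rw [List.append_assoc] at h₁ h₂
  obtain ⟨rfl, h⟩ := List.append_inj (h₁.trans h₂.symm) hlen
  exact ⟨rfl, List.append_cancel_left h⟩

theorem distinctBetween_map_range {L d : ℕ} {f : ℕ → ℕ}
    (hf : ∀ p p', p < p' → p' ≤ p + d → f p ≠ f p') :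
    DistinctBetween d ((List.range L).map f) := by
  intro z i j hij hi hj
  rw [getElem?_map_range_eq_some] at hi hj
  have hd : i + d < j := by
    by_contra h
    exact hf i j hij (by omega) (hi.2.trans hj.2.symm)
  calc d = (Finset.range d).card := (Finset.card_range d).symm
    _ ≤ _ := Finset.card_le_card_of_injOn (fun s => f (i + 1 + s)) (fun s hs => ?_)
      (fun s hs t ht hst => ?_)
  · simp only [Finset.coe_range, Set.mem_Iio] at hs
    simp only [Finset.mem_coe, List.mem_toFinset, List.mem_drop_iff_getElem]
    refine ⟨s, by simp only [List.length_take, List.length_map, List.length_range]; omega, ?_⟩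
    simp [Nat.add_comm]
  · simp only [Finset.coe_range, Set.mem_Iio] at hs ht
    by_contra hne
    rcases Nat.lt_or_gt_of_ne hne with h | h
    · exact hf _ _ (by omega) (by omega) hst
    · exact hf _ _ (by omega) (by omega) hst.symm

theorem Nat.eq_of_add_mod_eq {N a b c : ℕ} (ha : a < N) (hb : b < N)
    (h : (a + c) % N = (b + c) % N) : a = b :=
  (Nat.ModEq.add_right_cancel' c h).eq_of_lt_of_lt ha hb

theorem Nat.add_one_mod_cases (p : ℕ) {B : ℕ} (hB : 0 < B) :
    (p % B + 1 < B ∧ (p + 1) % B = p % B + 1) ∨ (p % B + 1 = B ∧ (p + 1) % B = 0) := by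
  have hdm := Nat.div_add_mod p B
  rcases Nat.lt_or_ge (p % B + 1) B with h | h
  · refine .inl ⟨h, ?_⟩
    rw [show p + 1 = B * (p / B) + (p % B + 1) by omega, Nat.mul_add_mod, Nat.mod_eq_of_lt h]
  · have := Nat.mod_lt p hB
    refine .inr ⟨by omega, ?_⟩
    rw [show p + 1 = B * (p / B + 1) by rw [Nat.mul_add]; omega, Nat.mul_mod_right]

/-- The `r`-th letter of the `q`-th block of `u_n(X_n)`: the blocks `2 i` and `2 i + 1` are
`a_n[π^i](X_n)` and `b_n[π^i](X_n)`. -/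
def blockLetter (n q r : ℕ) : ℕ :=
  if r % 2 = 1 then varY (r / 2 + 1)
  else if q % 2 = 0 then varX ((r / 2 + q / 2) % (n + 1)) else varZ ((r / 2 + q / 2) % (n + 1))

def uLetter (n p : ℕ) : ℕ := blockLetter n (p / (2 * n + 1)) (p % (2 * n + 1))

section BlockLetter

variable {n : ℕ}

theorem blockLetter_eq_of_odd_iff {q r q' r' : ℕ} (hr : r % 2 = 1) :
    blockLetter n q' r' = blockLetter n q r ↔ r' = r := by
  refine ⟨fun h => ?_, fun h => by simp [blockLetter, h, hr]⟩
  simp only [blockLetter, hr, if_true] at h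
  split_ifs at h <;> simp only [varX, varY, varZ] at h <;> omega

theorem blockLetter_eq_of_even_iff {q r q' r' : ℕ} (hr : r % 2 = 0) (hr' : r' % 2 = 0) :
    blockLetter n q r = blockLetter n q' r' ↔
      q % 2 = q' % 2 ∧ (r / 2 + q / 2) % (n + 1) = (r' / 2 + q' / 2) % (n + 1) := by
  simp only [blockLetter, hr, hr', zero_ne_one, if_false]
  split_ifs <;> simp only [varX, varZ] <;> omega

theorem blockLetter_left_inj_of_even {q q' r : ℕ} (hr : r % 2 = 0) (hq : q < 2 * (n + 1))
    (hq' : q' < 2 * (n + 1)) (h : blockLetter n q r = blockLetter n q' r) : q = q' := by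
  obtain ⟨hpar, hmod⟩ := (blockLetter_eq_of_even_iff hr hr).1 h
  rw [Nat.add_comm (r / 2), Nat.add_comm (r / 2)] at hmod
  have := Nat.eq_of_add_mod_eq (by omega) (by omega) hmod
  omega

end BlockLetter

section Restriction

variable {n : ℕ}

theorem restrict_replicate_varx (k : ℕ) : restrict (List.replicate k varx) (Xset n) = [] := by
  simp [restrict, Xset, varx, varX, varY, varZ]

theorem restrict_singleton_of_mem {a : ℕ} (h : a ∈ Xset n) : restrict [a] (Xset n) = [a] := by
  simp [restrict, h]

theorem restrict_interleave (k : ℕ) (c : ℕ → ℕ) (hc : ∀ i ≤ n, c i ∈ Xset n) :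
    restrict (List.replicate k varx ++ [c 0] ++
      (List.range n).flatMap (fun i =>
        List.replicate k varx ++ [varY (i + 1)] ++ List.replicate k varx ++ [c (i + 1)]) ++
      List.replicate k varx) (Xset n) =
    (List.range (2 * n + 1)).map fun r => if r % 2 = 1 then varY (r / 2 + 1) else c (r / 2) := by
  rw [← List.cons_flatMap_range_pair]
  simp only [restrict_append, restrict_flatMap, restrict_replicate_varx,
    restrict_singleton_of_mem (hc 0 n.zero_le), List.nil_append, List.append_nil,
    List.singleton_append]
  congr 1
  refine List.flatMap_congr fun i hi => ?_
  have hi : i < n := List.mem_range.1 hi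
  rw [restrict_singleton_of_mem ⟨i + 1, hi, Or.inr (Or.inl rfl)⟩,
    restrict_singleton_of_mem (hc _ hi)]
  simp [show (2 * i + 1) % 2 = 1 by omega, show (2 * i + 1) / 2 = i by omega,
    show (2 * i + 2) / 2 = i + 1 by omega]

theorem restrict_uWord (k : ℕ) :
    restrict (uWord n k) (Xset n) =
      (List.range (2 * (n + 1) * (2 * n + 1))).map (uLetter n) := by
  rw [show uLetter n = fun p => blockLetter n (p / (2 * n + 1)) (p % (2 * n + 1)) from rfl,
    ← List.flatMap_range_map_range, ← List.flatMap_range_two_mul, uWord, restrict_flatMap]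
  refine List.flatMap_congr fun i _ => ?_
  have hτ : ∀ j, (j + i) % (n + 1) ≤ n := fun j => Nat.le_of_lt_succ (Nat.mod_lt _ n.succ_pos)
  rw [restrict_append, aWord, bWord,
    restrict_interleave k (fun j => varX ((j + i) % (n + 1))) fun j _ => ⟨_, hτ j, Or.inl rfl⟩,
    restrict_interleave k (fun j => varZ ((j + i) % (n + 1))) fun j _ =>
      ⟨_, hτ j, Or.inr (Or.inr rfl)⟩]
  congr 1 <;> refine List.map_congr_left fun r _ => ?_ <;>
    simp [blockLetter, Nat.mul_add_div]

end Restriction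

section Letters

variable {n : ℕ}

theorem eq_of_uLetter_eq_of_mod_eq {p p' : ℕ} (hp : p < 2 * (n + 1) * (2 * n + 1))
    (hp' : p' < 2 * (n + 1) * (2 * n + 1)) (hmod : p % (2 * n + 1) = p' % (2 * n + 1))
    (heven : p % (2 * n + 1) % 2 = 0) (h : uLetter n p = uLetter n p') : p = p' := by
  have hdiv : p / (2 * n + 1) = p' / (2 * n + 1) := by
    unfold uLetter at h
    rw [← hmod] at h
    exact blockLetter_left_inj_of_even heven ((Nat.div_lt_iff_lt_mul (by omega)).2 hp)
      ((Nat.div_lt_iff_lt_mul (by omega)).2 hp') h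
  rw [← Nat.div_add_mod p (2 * n + 1), ← Nat.div_add_mod p' (2 * n + 1), hdiv, hmod]

theorem uLetter_pair_injective {p p' : ℕ} (hp : p + 1 < 2 * (n + 1) * (2 * n + 1))
    (hp' : p' + 1 < 2 * (n + 1) * (2 * n + 1)) (h₀ : uLetter n p = uLetter n p')
    (h₁ : uLetter n (p + 1) = uLetter n (p' + 1)) : p = p' := by
  have hB : 0 < 2 * n + 1 := by omega
  have hodd : ∀ a b, uLetter n a = uLetter n b →
      a % (2 * n + 1) % 2 = 0 ∨ b % (2 * n + 1) = a % (2 * n + 1) := fun a b h => by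
    rcases Nat.mod_two_eq_zero_or_one (a % (2 * n + 1)) with ha | ha
    · exact .inl ha
    · exact .inr ((blockLetter_eq_of_odd_iff ha).1 h.symm)
  -- The place `p % (2n+1)` is read off from a `y` among the two letters, or else it is `2n`.
  have := hodd _ _ h₀
  have := hodd _ _ h₀.symm
  have := hodd _ _ h₁
  have := hodd _ _ h₁.symm
  have := Nat.add_one_mod_cases p hB
  have := Nat.add_one_mod_cases p' hB
  rcases Nat.mod_two_eq_zero_or_one (p % (2 * n + 1)) with h | h
  · exact eq_of_uLetter_eq_of_mod_eq (by omega) (by omega) (by omega) h h₀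
  · have := eq_of_uLetter_eq_of_mod_eq hp hp' (by omega) (by omega) h₁
    omega

theorem uLetter_ne_of_lt_of_le {p p' : ℕ} (h : p < p') (h' : p' ≤ p + 2 * n) :
    uLetter n p ≠ uLetter n p' := by
  have hB : 0 < 2 * n + 1 := by omega
  have hp := Nat.div_add_mod p (2 * n + 1)
  have hp' := Nat.div_add_mod p' (2 * n + 1)
  have hr := Nat.mod_lt p hB
  have hr' := Nat.mod_lt p' hB
  intro heq
  rcases Nat.mod_two_eq_zero_or_one (p % (2 * n + 1)) with hpar | hpar
  · have hpar' : p' % (2 * n + 1) % 2 = 0 := by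
      by_contra hodd
      have := (blockLetter_eq_of_odd_iff (Nat.mod_two_ne_zero.1 hodd)).1 heq
      omega
    obtain ⟨hq, hmod⟩ := (blockLetter_eq_of_even_iff hpar hpar').1 heq
    have hle : p / (2 * n + 1) ≤ p' / (2 * n + 1) := Nat.div_le_div_right h.le
    have hle' : p' / (2 * n + 1) ≤ p / (2 * n + 1) + 1 := by
      by_contra hc
      have := Nat.mul_le_mul_left (2 * n + 1)
        (show p / (2 * n + 1) + 2 ≤ p' / (2 * n + 1) by omega)
      rw [Nat.mul_add] at this
      omega
    have hdiv : p / (2 * n + 1) = p' / (2 * n + 1) := by omega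
    rw [hdiv] at hmod hp
    have := Nat.eq_of_add_mod_eq (by omega) (by omega) hmod
    omega
  · have hmod := (blockLetter_eq_of_odd_iff hpar).1 heq.symm
    have := Nat.sub_mod_eq_zero_of_mod_eq hmod
    rw [Nat.mod_eq_of_lt (by omega)] at this
    omega

end Letters

theorem uWord_properties_general (n k m : ℕ) (hm : 1 ≤ m) :
    restrict (uWord n k) (Xset n) ≠ restrict (powerList (m + 1) (uWord n k)) (Xset n) ∧
    (∀ y z : ℕ, FactorAtMostOnce [y, z] (restrict (uWord n k) (Xset n))) ∧
    DistinctBetween n (restrict (uWord n k) (Xset n)) := by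
  rw [restrict_powerList, restrict_uWord]
  refine ⟨powerList_ne_self ?_ (by omega),
    factorAtMostOnce_pair_map_range fun _ _ hp hp' => uLetter_pair_injective hp hp',
    distinctBetween_map_range fun _ _ h h' => uLetter_ne_of_lt_of_le h (by omega)⟩
  simp [List.map_eq_nil_iff]

/-- **Properties (P0), (P1), (P2) of the words `u_n`.** For positive integers `n`, `k` and
`m ≥ 1`, with `v_n = u_n^{m+1}`: (P0) `u_n(X_n) ≠ v_n(X_n)`; (P1) for all variables `y, z`,
the two-letter word `yz` occurs as a factor of `u_n(X_n)` at most once; (P2) for every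
variable `z`, between any two occurrences of `z` in `u_n(X_n)` there occur at least `n`
pairwise distinct variables. -/
theorem uWord_properties (n k m : ℕ) (hn : 0 < n) (hk : 0 < k) (hm : 1 ≤ m) :
    restrict (uWord n k) (Xset n) ≠ restrict (powerList (m + 1) (uWord n k)) (Xset n) ∧
    (∀ y z : ℕ, FactorAtMostOnce [y, z] (restrict (uWord n k) (Xset n))) ∧
    DistinctBetween n (restrict (uWord n k) (Xset n)) :=
  uWord_properties_general n k m hm
end

section
/- For every positive integer m, the number of partial maps of the chain 1 < 2 < ⋯ < m to itself that are injective, order preserving and extensive equals the (m+1)-st Catalan number C_{m+1} (with C_0 = 1, C_1 = 1, C_2 = 2, …). In particular, for m = 4 this number equals C_5 = 42, so |IC_4| = 42. -/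
/-!
An element of `IC_m` is determined by its domain `X` and image `Y`: being injective and order
preserving, it sends the `k`-th element of `X` to the `k`-th element of `Y`, i.e. it is
`n ↦ nth Y (count X n)`. This map is extensive exactly when every initial segment `[0, n)`
contains at least as many points of `X` as of `Y` (a ballot condition).

Pairs `(X, Y)` with `|X| = |Y|` satisfying the ballot condition correspond to Dyck words of
semilength `m + 1`: write `U`, then for each `j < m` the two letters (`D` iff `j ∈ Y`) and
(`U` iff `j ∈ X`), then `D`. The prefix of length `2 j + 1` has height
`1 + 2 (|X ∩ [0, j)| - |Y ∩ [0, j)|)`, so the ballot condition is exactly the Dyck condition, and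
Dyck words of semilength `m + 1` are counted by `C_{m+1}`.
-/

open Finset
open Nat (count nth)

namespace Nat

variable {p q : ℕ → Prop} [DecidablePred p] [DecidablePred q]

theorem nth_le_nth_of_count_le (h : ∀ n, count q n ≤ count p n) {k : ℕ}
    (hk : ∀ hf : (Set.ofPred q).Finite, k < #hf.toFinset) : nth p k ≤ nth q k := by
  have : k < count p (nth q k + 1) := by
    have := h (nth q k + 1)
    rw [count_nth_succ hk] at this
    omega
  exact Nat.lt_succ_iff.mp (nth_lt_of_lt_count this)

section finset

variable (s : Finset ℕ)

theorem card_toFinset_ofPred_mem (hf : (Set.ofPred (· ∈ s)).Finite) : #hf.toFinset = #s := by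
  simp [Set.ofPred]

theorem nth_mem_of_lt_card_finset {k : ℕ} (hk : k < #s) : nth (· ∈ s) k ∈ s :=
  nth_mem_of_lt_card s.finite_toSet ((card_toFinset_ofPred_mem s _).symm ▸ hk)

theorem count_nth_of_lt_card_finset {k : ℕ} (hk : k < #s) :
    count (· ∈ s) (nth (· ∈ s) k) = k :=
  count_nth_of_lt_card_finite s.finite_toSet ((card_toFinset_ofPred_mem s _).symm ▸ hk)

theorem count_lt_card_finset {n : ℕ} (hn : n ∈ s) : count (· ∈ s) n < #s :=
  card_toFinset_ofPred_mem s s.finite_toSet ▸ count_lt_card s.finite_toSet hn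

theorem count_mem_eq_card {n : ℕ} (hs : s ⊆ range n) : count (· ∈ s) n = #s := by
  rw [count_eq_card_filter_range, filter_mem_eq_inter, inter_eq_right.mpr hs]

end finset

theorem count_mem_image {β : Type*} [DecidableEq β] {s : Finset β} {f : β → ℕ}
    (hf : Set.InjOn f s) (n : ℕ) : count (· ∈ s.image f) n = #{x ∈ s | f x < n} := by
  rw [count_eq_card_filter_range, ← Finset.card_image_of_injOn (hf.mono (filter_subset _ s))]
  congr 1
  ext
  simp only [mem_filter, mem_range, mem_image]
  grind

end Nat

@[ext]
structure BallotPair (m : ℕ) where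
  dom : Finset ℕ
  img : Finset ℕ
  dom_subset : dom ⊆ range m
  img_subset : img ⊆ range m
  card_dom_eq : #dom = #img
  count_img_le : ∀ n, count (· ∈ img) n ≤ count (· ∈ dom) n

namespace BallotPair

variable {m : ℕ} (P : BallotPair m) {i j n : ℕ}

noncomputable def apply (n : ℕ) : ℕ := nth (· ∈ P.img) (count (· ∈ P.dom) n)

theorem count_dom_lt_card_img (hn : n ∈ P.dom) : count (· ∈ P.dom) n < #P.img :=
  P.card_dom_eq ▸ Nat.count_lt_card_finset _ hn

theorem apply_mem_img (hn : n ∈ P.dom) : P.apply n ∈ P.img :=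
  Nat.nth_mem_of_lt_card_finset _ (P.count_dom_lt_card_img hn)

theorem apply_lt (hn : n ∈ P.dom) : P.apply n < m :=
  mem_range.mp (P.img_subset (P.apply_mem_img hn))

theorem count_img_apply (hn : n ∈ P.dom) :
    count (· ∈ P.img) (P.apply n) = count (· ∈ P.dom) n :=
  Nat.count_nth_of_lt_card_finset _ (P.count_dom_lt_card_img hn)

theorem le_apply (hn : n ∈ P.dom) : n ≤ P.apply n :=
  calc n = nth (· ∈ P.dom) (count (· ∈ P.dom) n) := (Nat.nth_count hn).symm
    _ ≤ P.apply n := Nat.nth_le_nth_of_count_le P.count_img_le fun hf =>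
        (Nat.card_toFinset_ofPred_mem P.img hf).symm ▸ P.count_dom_lt_card_img hn

theorem apply_le_apply (hj : j ∈ P.dom) (hij : i ≤ j) : P.apply i ≤ P.apply j :=
  Nat.nth_le_nth_of_lt_card P.img.finite_toSet (Nat.count_monotone _ hij)
    ((Nat.card_toFinset_ofPred_mem P.img _).symm ▸ P.count_dom_lt_card_img hj)

theorem eq_of_apply_eq (hi : i ∈ P.dom) (hj : j ∈ P.dom) (h : P.apply i = P.apply j) : i = j :=
  Nat.count_injective hi hj (by rw [← P.count_img_apply hi, ← P.count_img_apply hj, h])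

theorem exists_apply_eq (hn : n ∈ P.img) : ∃ i ∈ P.dom, P.apply i = n := by
  have hk : count (· ∈ P.img) n < #P.dom := P.card_dom_eq ▸ Nat.count_lt_card_finset _ hn
  refine ⟨nth (· ∈ P.dom) (count (· ∈ P.img) n), Nat.nth_mem_of_lt_card_finset _ hk, ?_⟩
  rw [apply, Nat.count_nth_of_lt_card_finset _ hk, Nat.nth_count hn]

noncomputable def toICmon : ICmon m where
  toFun i := if h : (i : ℕ) ∈ P.dom then some ⟨P.apply i, P.apply_lt h⟩ else none
  inj' i j a hi hj := by
    split_ifs at hi hj with h₁ h₂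
    exact Fin.ext <| P.eq_of_apply_eq h₁ h₂ <| congrArg Fin.val <|
      (Option.some_inj.mp hi).trans (Option.some_inj.mp hj).symm
  mono' i j a b hij hi hj := by
    split_ifs at hi hj with h₁ h₂
    cases hi; cases hj
    exact P.apply_le_apply h₂ hij
  extv' i a hi := by
    split_ifs at hi with h
    cases hi
    exact P.le_apply h

theorem toICmon_toFun_eq_some {i a : Fin m} :
    P.toICmon.toFun i = some a ↔ (i : ℕ) ∈ P.dom ∧ P.apply i = a := by
  simp only [toICmon]
  split_ifs with h <;> simp [h, Fin.ext_iff]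

theorem toICmon_toFun_eq_none {i : Fin m} : P.toICmon.toFun i = none ↔ (i : ℕ) ∉ P.dom := by
  simp only [toICmon]
  split_ifs with h <;> simp [h]

end BallotPair

namespace ICmon

variable {m : ℕ} (α : ICmon m)

def graph : Finset (Fin m × Fin m) := {x | α.toFun x.1 = some x.2}

theorem mem_graph {x : Fin m × Fin m} : x ∈ α.graph ↔ α.toFun x.1 = some x.2 := by
  simp [graph]

theorem lt_iff_lt_of_mem_graph {x y : Fin m × Fin m} (hx : x ∈ α.graph) (hy : y ∈ α.graph) :
    x.1 < y.1 ↔ x.2 < y.2 := by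
  rw [mem_graph] at hx hy
  constructor
  · intro h
    refine lt_of_le_of_ne (α.mono' _ _ _ _ h.le hx hy) fun he => h.ne ?_
    exact α.inj' _ _ _ hx (he ▸ hy)
  · intro h
    by_contra! h'
    exact h.not_ge (α.mono' _ _ _ _ h' hy hx)

theorem eq_of_mem_graph {x y : Fin m × Fin m} (hx : x ∈ α.graph) (hy : y ∈ α.graph)
    (h : x.1 = y.1 ∨ x.2 = y.2) : x = y := by
  have := α.lt_iff_lt_of_mem_graph hx hy
  have := α.lt_iff_lt_of_mem_graph hy hx
  ext <;> omega

theorem injOn_fst_graph : Set.InjOn (fun x : Fin m × Fin m => (x.1 : ℕ)) α.graph :=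
  fun _ hx _ hy h => α.eq_of_mem_graph hx hy (.inl (Fin.ext h))

theorem injOn_snd_graph : Set.InjOn (fun x : Fin m × Fin m => (x.2 : ℕ)) α.graph :=
  fun _ hx _ hy h => α.eq_of_mem_graph hx hy (.inr (Fin.ext h))

def dom : Finset ℕ := α.graph.image fun x => (x.1 : ℕ)

def img : Finset ℕ := α.graph.image fun x => (x.2 : ℕ)

theorem coe_mem_dom_iff (i : Fin m) : (i : ℕ) ∈ α.dom ↔ α.toFun i ≠ none := by
  simp only [dom, mem_image, mem_graph, Prod.exists]
  constructor
  · rintro ⟨j, a, h, hj⟩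
    rw [← Fin.ext hj, h]
    exact Option.some_ne_none a
  · intro h
    obtain ⟨a, ha⟩ := Option.ne_none_iff_exists'.mp h
    exact ⟨i, a, ha, rfl⟩

theorem count_dom (n : ℕ) : count (· ∈ α.dom) n = #{x ∈ α.graph | (x.1 : ℕ) < n} :=
  Nat.count_mem_image α.injOn_fst_graph n

theorem count_img (n : ℕ) : count (· ∈ α.img) n = #{x ∈ α.graph | (x.2 : ℕ) < n} :=
  Nat.count_mem_image α.injOn_snd_graph n

def toBallotPair : BallotPair m where
  dom := α.dom
  img := α.img
  dom_subset n hn := by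
    obtain ⟨x, -, rfl⟩ := mem_image.mp hn
    exact mem_range.mpr x.1.isLt
  img_subset n hn := by
    obtain ⟨x, -, rfl⟩ := mem_image.mp hn
    exact mem_range.mpr x.2.isLt
  card_dom_eq := by
    rw [dom, img, card_image_of_injOn α.injOn_fst_graph, card_image_of_injOn α.injOn_snd_graph]
  count_img_le n := by
    rw [count_dom, count_img]
    refine card_le_card (monotone_filter_right _ fun x hx h => ?_)
    exact lt_of_le_of_lt (α.extv' _ _ ((α.mem_graph).mp hx)) h

theorem toBallotPair_apply {i a : Fin m} (h : α.toFun i = some a) :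
    α.toBallotPair.apply i = a := by
  have hx : (i, a) ∈ α.graph := α.mem_graph.mpr h
  have hcount : count (· ∈ α.dom) i = count (· ∈ α.img) a := by
    rw [count_dom, count_img]
    congr 1
    refine filter_congr fun y hy => ?_
    rw [← Fin.lt_def, ← Fin.lt_def]
    exact α.lt_iff_lt_of_mem_graph hy hx
  rw [BallotPair.apply, toBallotPair, hcount]
  exact Nat.nth_count (mem_image_of_mem _ hx)

end ICmon

namespace BallotPair

variable {m : ℕ} (P : BallotPair m)

theorem dom_toICmon : P.toICmon.dom = P.dom := by
  ext n
  simp only [ICmon.dom, mem_image, ICmon.mem_graph, toICmon_toFun_eq_some]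
  constructor
  · rintro ⟨x, ⟨hx, -⟩, rfl⟩
    exact hx
  · intro hn
    have hnm := mem_range.mp (P.dom_subset hn)
    exact ⟨(⟨n, hnm⟩, ⟨P.apply n, P.apply_lt hn⟩), ⟨hn, rfl⟩, rfl⟩

theorem img_toICmon : P.toICmon.img = P.img := by
  ext n
  simp only [ICmon.img, mem_image, ICmon.mem_graph, toICmon_toFun_eq_some]
  constructor
  · rintro ⟨x, ⟨hx, hxa⟩, rfl⟩
    exact hxa ▸ P.apply_mem_img hx
  · intro hn
    obtain ⟨i, hi, rfl⟩ := P.exists_apply_eq hn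
    have him := mem_range.mp (P.dom_subset hi)
    exact ⟨(⟨i, him⟩, ⟨P.apply i, P.apply_lt hi⟩), ⟨hi, rfl⟩, rfl⟩

end BallotPair

noncomputable def ICmon.equivBallotPair (m : ℕ) : ICmon m ≃ BallotPair m where
  toFun α := α.toBallotPair
  invFun P := P.toICmon
  left_inv α := by
    ext1; funext i
    rcases h : α.toFun i with _ | a
    · rw [BallotPair.toICmon_toFun_eq_none]
      exact fun hi => (α.coe_mem_dom_iff i).mp hi h
    · rw [BallotPair.toICmon_toFun_eq_some]
      exact ⟨(α.coe_mem_dom_iff i).mpr (h ▸ Option.some_ne_none a), α.toBallotPair_apply h⟩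
  right_inv P := BallotPair.ext P.dom_toICmon P.img_toICmon

open DyckStep

section dyckLetter

variable {m : ℕ} {X Y : Finset ℕ} {j : ℕ}

def dyckLetter (m : ℕ) (X Y : Finset ℕ) : ℕ → DyckStep
  | 0 => U
  | n + 1 =>
    if n = 2 * m then D
    else if n % 2 = 0 then (if n / 2 ∈ Y then D else U)
    else if n / 2 ∈ X then U else D

theorem dyckLetter_odd (hj : j < m) : dyckLetter m X Y (2 * j + 1) = if j ∈ Y then D else U := by
  have hne : 2 * j ≠ 2 * m := by omega
  simp only [dyckLetter, hne, Nat.mul_mod_right, Nat.mul_div_cancel_left j two_pos, ↓reduceIte]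

theorem dyckLetter_even : dyckLetter m X Y (2 * j + 2) = if j ∈ X then U else D := by
  have hne : 2 * j + 1 ≠ 2 * m := by omega
  have hodd : (2 * j + 1) % 2 ≠ 0 := by omega
  simp only [dyckLetter, hne, hodd, show (2 * j + 1) / 2 = j by omega, ↓reduceIte]

theorem dyckLetter_last : dyckLetter m X Y (2 * m + 1) = D := by
  simp [dyckLetter]

theorem count_dyckLetter_succ (s : DyckStep) (n : ℕ) :
    count (dyckLetter m X Y · = s) (n + 1) =
      count (dyckLetter m X Y · = s) n + if dyckLetter m X Y n = s then 1 else 0 :=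
  Nat.count_succ _ n

theorem count_dyckLetter (hj : j ≤ m) :
    count (dyckLetter m X Y · = U) (2 * j + 1) + count (· ∈ Y) j =
      j + 1 + count (· ∈ X) j ∧
    count (dyckLetter m X Y · = D) (2 * j + 1) + count (· ∈ X) j = j + count (· ∈ Y) j := by
  induction j with
  | zero => simp [Nat.count_one, dyckLetter]
  | succ j ih =>
    obtain ⟨ihU, ihD⟩ := ih (by omega)
    rw [show 2 * (j + 1) + 1 = 2 * j + 1 + 1 + 1 by ring,
      count_dyckLetter_succ U (2 * j + 1 + 1), count_dyckLetter_succ U (2 * j + 1),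
      count_dyckLetter_succ D (2 * j + 1 + 1),
      count_dyckLetter_succ D (2 * j + 1), dyckLetter_odd (by omega),
      show 2 * j + 1 + 1 = 2 * j + 2 by ring, dyckLetter_even,
      Nat.count_succ (· ∈ X) j, Nat.count_succ (· ∈ Y) j]
    by_cases hX : j ∈ X <;> by_cases hY : j ∈ Y <;>
      simp only [hX, hY, ↓reduceIte, reduceCtorEq] <;> omega

theorem count_dyckLetter_full (m : ℕ) (X Y : Finset ℕ) :
    count (dyckLetter m X Y · = U) (2 * m + 2) + count (· ∈ Y) m =
      m + 1 + count (· ∈ X) m ∧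
    count (dyckLetter m X Y · = D) (2 * m + 2) + count (· ∈ X) m =
      m + 1 + count (· ∈ Y) m := by
  obtain ⟨hU, hD⟩ := count_dyckLetter (X := X) (Y := Y) (le_refl m)
  rw [count_dyckLetter_succ U (2 * m + 1), count_dyckLetter_succ D (2 * m + 1), dyckLetter_last]
  simp only [reduceCtorEq, ↓reduceIte]
  omega

theorem count_D_le_count_U_dyckLetter_iff :
    (∀ k ≤ 2 * m + 2,
      count (dyckLetter m X Y · = D) k ≤ count (dyckLetter m X Y · = U) k) ↔
      ∀ j ≤ m, count (· ∈ Y) j ≤ count (· ∈ X) j := by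
  constructor
  · intro h j hj
    have := h (2 * j + 1) (by omega)
    have := count_dyckLetter (X := X) (Y := Y) hj
    omega
  · intro h k hk
    have hodd : ∀ j ≤ m, count (dyckLetter m X Y · = D) (2 * j + 1) + 1 ≤
        count (dyckLetter m X Y · = U) (2 * j + 1) := fun j hj => by
      have := h j hj
      have := count_dyckLetter (X := X) (Y := Y) hj
      omega
    rcases Nat.even_or_odd' k with ⟨j, rfl | rfl⟩
    · cases j with
      | zero => simp
      | succ j =>
        have := hodd j (by omega)
        rw [show 2 * (j + 1) = 2 * j + 1 + 1 by ring, count_dyckLetter_succ D (2 * j + 1),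
          count_dyckLetter_succ U (2 * j + 1)]
        split_ifs <;> omega
    · exact (hodd j (by omega)).trans' (Nat.le_succ _)

end dyckLetter

def dyckList (m : ℕ) (X Y : Finset ℕ) : List DyckStep :=
  (List.range (2 * m + 2)).map (dyckLetter m X Y)

theorem count_take_dyckList (m : ℕ) (X Y : Finset ℕ) (s : DyckStep) (i : ℕ) :
    ((dyckList m X Y).take i).count s = count (dyckLetter m X Y · = s) (min i (2 * m + 2)) := by
  simp only [dyckList, ← List.map_take, List.take_range, List.count, List.countP_map, Nat.count]
  rfl

theorem count_dyckList (m : ℕ) (X Y : Finset ℕ) (s : DyckStep) :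
    (dyckList m X Y).count s = count (dyckLetter m X Y · = s) (2 * m + 2) := by
  have := count_take_dyckList m X Y s (2 * m + 2)
  rwa [min_self, List.take_of_length_le (by simp [dyckList])] at this

namespace BallotPair

variable {m : ℕ} (P : BallotPair m)

theorem count_dom_eq_count_img : count (· ∈ P.dom) m = count (· ∈ P.img) m := by
  rw [Nat.count_mem_eq_card _ P.dom_subset, Nat.count_mem_eq_card _ P.img_subset,
    P.card_dom_eq]

def toDyckWord : DyckWord where
  toList := dyckList m P.dom P.img
  count_U_eq_count_D := by
    have := count_dyckLetter_full m P.dom P.img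
    have := P.count_dom_eq_count_img
    rw [count_dyckList, count_dyckList]
    omega
  count_D_le_count_U i := by
    rw [count_take_dyckList, count_take_dyckList]
    exact count_D_le_count_U_dyckLetter_iff.mpr (fun j _ => P.count_img_le j) _
      (min_le_right _ _)

theorem semilength_toDyckWord : P.toDyckWord.semilength = m + 1 := by
  have := count_dyckLetter_full m P.dom P.img
  have := P.count_dom_eq_count_img
  rw [DyckWord.semilength, toDyckWord, count_dyckList]
  omega

end BallotPair

def decodeDom (m : ℕ) (l : List DyckStep) : Finset ℕ :=
  {j ∈ range m | l[2 * j + 2]? = some U}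

def decodeImg (m : ℕ) (l : List DyckStep) : Finset ℕ :=
  {j ∈ range m | l[2 * j + 1]? = some D}

theorem decodeDom_subset (m : ℕ) (l : List DyckStep) : decodeDom m l ⊆ range m :=
  filter_subset _ _

theorem decodeImg_subset (m : ℕ) (l : List DyckStep) : decodeImg m l ⊆ range m :=
  filter_subset _ _

theorem DyckWord.getElem?_zero {p : DyckWord} (hp : p.toList ≠ []) : p.toList[0]? = some U := by
  rw [← List.head?_eq_getElem?, List.head?_eq_some_head hp, p.head_eq_U]

theorem DyckWord.getElem?_length_sub_one {p : DyckWord} (hp : p.toList ≠ []) :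
    p.toList[p.toList.length - 1]? = some D := by
  rw [← List.getLast?_eq_getElem?, List.getLast?_eq_some_getLast hp, p.getLast_eq_D]

theorem DyckWord.toList_eq_dyckList {m : ℕ} (p : DyckWord) (hp : p.semilength = m + 1) :
    p.toList = dyckList m (decodeDom m p) (decodeImg m p) := by
  have hlen : p.toList.length = 2 * m + 2 := by
    rw [← p.two_mul_semilength_eq_length, hp, mul_add_one]
  have hne : p.toList ≠ [] := List.ne_nil_of_length_pos (by omega)
  refine List.ext_getElem? fun n => ?_
  rw [dyckList, List.getElem?_map]
  by_cases hn : n < 2 * m + 2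
  swap
  · rw [List.getElem?_eq_none (by omega), List.getElem?_eq_none (by simp; omega),
      Option.map_none]
  rw [List.getElem?_range hn, Option.map_some]
  obtain ⟨c, hc⟩ : ∃ c, p.toList[n]? = some c := ⟨_, List.getElem?_eq_getElem (by omega)⟩
  rcases Nat.even_or_odd' n with ⟨j, rfl | rfl⟩
  · cases j with
    | zero => exact DyckWord.getElem?_zero hne
    | succ j =>
      rw [show 2 * (j + 1) = 2 * j + 2 by ring] at hc ⊢
      rw [dyckLetter_even, hc]
      cases c <;> simp [decodeDom, hc, show j < m by omega]
  · rcases (show j < m ∨ j = m by omega) with hj | rfl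
    · rw [dyckLetter_odd hj, hc]
      cases c <;> simp [decodeImg, hc, hj]
    · rw [dyckLetter_last, ← DyckWord.getElem?_length_sub_one hne, hlen]
      rfl

theorem decodeDom_dyckList {m : ℕ} {X : Finset ℕ} (Y : Finset ℕ) (hX : X ⊆ range m) :
    decodeDom m (dyckList m X Y) = X := by
  ext j
  simp only [decodeDom, mem_filter, mem_range, dyckList, List.getElem?_map]
  constructor
  · rintro ⟨hj, h⟩
    rw [List.getElem?_range (by omega), Option.map_some, dyckLetter_even] at h
    by_contra hjX
    simp [hjX] at h
  · intro hjX
    have hj := mem_range.mp (hX hjX)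
    rw [List.getElem?_range (by omega), Option.map_some, dyckLetter_even]
    simp [hjX, hj]

theorem decodeImg_dyckList {m : ℕ} (X : Finset ℕ) {Y : Finset ℕ} (hY : Y ⊆ range m) :
    decodeImg m (dyckList m X Y) = Y := by
  ext j
  simp only [decodeImg, mem_filter, mem_range, dyckList, List.getElem?_map]
  constructor
  · rintro ⟨hj, h⟩
    rw [List.getElem?_range (by omega), Option.map_some, dyckLetter_odd hj] at h
    by_contra hjY
    simp [hjY] at h
  · intro hjY
    have hj := mem_range.mp (hY hjY)
    rw [List.getElem?_range (by omega), Option.map_some, dyckLetter_odd hj]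
    simp [hjY, hj]

theorem card_decodeDom {m : ℕ} (p : DyckWord) (hp : p.semilength = m + 1) :
    #(decodeDom m p) = #(decodeImg m p) := by
  have h := p.count_U_eq_count_D
  rw [p.toList_eq_dyckList hp, count_dyckList, count_dyckList] at h
  have := count_dyckLetter_full m (decodeDom m p) (decodeImg m p)
  rw [← Nat.count_mem_eq_card _ (decodeDom_subset m p),
    ← Nat.count_mem_eq_card _ (decodeImg_subset m p)]
  omega

namespace BallotPair

variable {m : ℕ}

def ofDyckWord (p : DyckWord) (hp : p.semilength = m + 1) : BallotPair m where
  dom := decodeDom m p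
  img := decodeImg m p
  dom_subset := decodeDom_subset m p
  img_subset := decodeImg_subset m p
  card_dom_eq := card_decodeDom p hp
  count_img_le n := by
    rcases le_total n m with hn | hn
    · refine count_D_le_count_U_dyckLetter_iff.mp (fun k hk => ?_) n hn
      have := p.count_D_le_count_U k
      rwa [p.toList_eq_dyckList hp, count_take_dyckList, count_take_dyckList,
        min_eq_left hk] at this
    · have hm := range_subset_range.mpr hn
      rw [Nat.count_mem_eq_card _ ((decodeImg_subset m p).trans hm),
        Nat.count_mem_eq_card _ ((decodeDom_subset m p).trans hm), card_decodeDom p hp]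

def equivDyckWord (m : ℕ) : BallotPair m ≃ {p : DyckWord // p.semilength = m + 1} where
  toFun P := ⟨P.toDyckWord, P.semilength_toDyckWord⟩
  invFun p := ofDyckWord p.1 p.2
  left_inv P :=
    BallotPair.ext (decodeDom_dyckList _ P.dom_subset) (decodeImg_dyckList _ P.img_subset)
  right_inv p := Subtype.ext (DyckWord.ext (p.1.toList_eq_dyckList p.2).symm)

end BallotPair

theorem ICmon.card_eq_catalan (m : ℕ) : Nat.card (ICmon m) = catalan (m + 1) := by
  rw [Nat.card_congr ((equivBallotPair m).trans (BallotPair.equivDyckWord m)),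
    Nat.card_eq_fintype_card, DyckWord.card_dyckWord_semilength_eq_catalan]

/-- **Counting `IC_m`.** For every positive integer `m`, the number of partial maps of the
`m`-element chain to itself that are injective, order preserving and extensive equals the
`(m+1)`-st Catalan number; in particular `|IC₄| = C₅ = 42`. -/
theorem card_ICmon :
    (∀ m : ℕ, 0 < m → Nat.card (ICmon m) = catalan (m + 1)) ∧
    Nat.card IC4 = catalan 5 ∧ catalan 5 = 42 :=
  ⟨fun m _ => ICmon.card_eq_catalan m, ICmon.card_eq_catalan 4, by
    simp [catalan_succ', Finset.Nat.sum_antidiagonal_eq_sum_range_succ_mk, Finset.sum_range_succ]⟩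
end
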